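/- arXiv:1003.3557 — 3 statements merged into one kernel-verified Lean document; each statement's English description precedes it below -/
import Mathlib

section
/- Definable choice for constructible sets: Let K be a definably complete expansion of an ordered field, let P ⊆ K be a set of parameters, and let A ⊆ K^n be nonempty, constructible, and definable with parameters from P. Then there exists a point a ∈ A that is definable over P, i.e., such that the singleton {a} ⊆ K^n is definable with parameters from P. -/
open FirstOrder Set

namespace Tame

variable (L : FirstOrder.Language) (K : Type*) [Field K] [LinearOrder K] [IsStrictOrderedRing K]
  [TopologicalSpace K] [OrderTopology K] [L.Structure K]

/-- A set is discrete if each of its points is isolated. -/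
def IsDiscreteSet {α : Type*} [TopologicalSpace α] (X : Set α) : Prop :=
  ∀ x ∈ X, ∃ U : Set α, IsOpen U ∧ U ∩ X = {x}

/-- A set is nowhere dense if its closure has empty interior. -/
def IsNwd {α : Type*} [TopologicalSpace α] (X : Set α) : Prop :=
  interior (closure X) = ∅

/-- `K` is an expansion of an ordered field: the order and the graphs of addition and
multiplication are definable without parameters. -/
def IsOrderedFieldExpansion : Prop :=
  Set.Definable (∅ : Set K) L {x : Fin 2 → K | x 0 < x 1} ∧
  Set.Definable (∅ : Set K) L {x : Fin 3 → K | x 0 + x 1 = x 2} ∧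
  Set.Definable (∅ : Set K) L {x : Fin 3 → K | x 0 * x 1 = x 2}

/-- Definable completeness: every nonempty definable subset of `K` that is bounded above has a
least upper bound. -/
def DefinablyComplete : Prop :=
  ∀ s : Set K, Set.Definable₁ (Set.univ : Set K) L s → s.Nonempty → BddAbove s →
    ∃ a : K, IsLUB s a

/-- Boundedness of a subset of `K^n`. -/
def IsBddSet {n : ℕ} (X : Set (Fin n → K)) : Prop :=
  ∃ r : K, ∀ x ∈ X, ∀ i, |x i| ≤ r

/-- A subset of `K^n` is pseudo-finite if it is closed, bounded and discrete. -/
def PseudoFinite {n : ℕ} (X : Set (Fin n → K)) : Prop :=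
  IsClosed X ∧ IsBddSet K X ∧ IsDiscreteSet X

/-- A subset of `K` is pseudo-finite if it is closed, bounded and discrete. -/
def PseudoFinite1 (X : Set K) : Prop :=
  IsClosed X ∧ (∃ r : K, ∀ x ∈ X, |x| ≤ r) ∧ IsDiscreteSet X

/-- The fiber of `Y ⊆ K^{1+n}` at `t`. -/
def fib {n : ℕ} (Y : Set (Fin (n + 1) → K)) (t : K) : Set (Fin n → K) :=
  {x | Fin.cons t x ∈ Y}

/-- The fiber at `t` of `Y ⊆ K^2`, viewed as a subset of `K`. -/
def fib1 (Y : Set (Fin 2 → K)) (t : K) : Set K :=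
  {x | ![t, x] ∈ Y}

/-- A subset of `K^n` is (definably) meager if it is the union of a definable increasing family
of nowhere dense sets. -/
def DefMeager {n : ℕ} (X : Set (Fin n → K)) : Prop :=
  ∃ Y : Set (Fin (n + 1) → K), Set.Definable (Set.univ : Set K) L Y ∧
    (∀ s t : K, s ≤ t → fib K Y s ⊆ fib K Y t) ∧
    (∀ t : K, IsNwd (fib K Y t)) ∧
    X = ⋃ t : K, fib K Y t

/-- A subset of `K` is (definably) meager if it is the union of a definable increasing family
of nowhere dense sets. -/
def DefMeager1 (X : Set K) : Prop :=
  ∃ Y : Set (Fin 2 → K), Set.Definable (Set.univ : Set K) L Y ∧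
    (∀ s t : K, s ≤ t → fib1 K Y s ⊆ fib1 K Y t) ∧
    (∀ t : K, IsNwd (fib1 K Y t)) ∧
    X = ⋃ t : K, fib1 K Y t

/-- `K` is definably Baire if `K` is not meager in itself. -/
def DefinablyBaire : Prop := ¬ DefMeager1 L K (Set.univ : Set K)

/-- An Fσ subset of `K^n`: the union of a definable increasing family of closed sets. -/
def DefFsigma {n : ℕ} (X : Set (Fin n → K)) : Prop :=
  ∃ Y : Set (Fin (n + 1) → K), Set.Definable (Set.univ : Set K) L Y ∧
    (∀ s t : K, s ≤ t → fib K Y s ⊆ fib K Y t) ∧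
    (∀ t : K, IsClosed (fib K Y t)) ∧
    X = ⋃ t : K, fib K Y t

/-- Finite Boolean combinations of open sets (constructible sets). -/
inductive IsBoolCombOpens {α : Type*} [TopologicalSpace α] : Set α → Prop
  | basic {U : Set α} : IsOpen U → IsBoolCombOpens U
  | compl {s : Set α} : IsBoolCombOpens s → IsBoolCombOpens sᶜ
  | union {s t : Set α} : IsBoolCombOpens s → IsBoolCombOpens t →
      IsBoolCombOpens (s ∪ t)

/-- `K` is a-minimal if every definable discrete closed subset of `K` is pseudo-finite. -/
def AMinimal : Prop :=
  ∀ X : Set K, Set.Definable₁ (Set.univ : Set K) L X → IsDiscreteSet X → IsClosed X →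
    PseudoFinite1 K X

/-- `K` is i-minimal if every definable subset of `K` with empty interior is nowhere dense. -/
def IMinimal : Prop :=
  ∀ X : Set K, Set.Definable₁ (Set.univ : Set K) L X → interior X = ∅ → IsNwd X

/-- A function `K → K` is definable if its graph is definable. -/
def DefFun1 (f : K → K) : Prop :=
  Set.Definable (Set.univ : Set K) L {x : Fin 2 → K | x 1 = f (x 0)}

/-- Local o-minimality: for every definable `f : K → K` and every `x`, the sign of `f` is
constant on some interval `(x, y)` with `y > x`. -/
def LocallyOMinimal : Prop :=
  ∀ f : K → K, DefFun1 L K f → ∀ x : K, ∃ y : K, x < y ∧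
    ((∀ z ∈ Set.Ioo x y, 0 < f z) ∨ (∀ z ∈ Set.Ioo x y, f z = 0) ∨
      (∀ z ∈ Set.Ioo x y, f z < 0))

open Classical in
/-- The dimension of a subset of `K^n`: the largest `d` such that the projection of `X` onto
some `d` coordinates has nonempty interior; the empty set has dimension `-1`. -/
noncomputable def ddim {n : ℕ} (X : Set (Fin n → K)) : ℤ :=
  if X = ∅ then -1
  else (↑(sSup {d : ℕ | ∃ p : Fin d → Fin n, Function.Injective p ∧
    (interior ((fun x : Fin n → K => x ∘ p) '' X)).Nonempty}) : ℤ)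

/-- The graph of `f` restricted to `X`, as a subset of `K^{n+m}`, is definable. -/
def DefFunGraphOn {n m : ℕ} (X : Set (Fin n → K)) (f : (Fin n → K) → (Fin m → K)) : Prop :=
  Set.Definable (Set.univ : Set K) L
    {z : Fin (n + m) → K | ∃ x ∈ X, z = Fin.append x (f x)}

/-- The graph of a `K`-valued function restricted to `U ⊆ K^n` is definable. -/
def DefFunKOn {n : ℕ} (U : Set (Fin n → K)) (f : (Fin n → K) → K) : Prop :=
  Set.Definable (Set.univ : Set K) L
    {z : Fin (n + 1) → K | (z ∘ Fin.castSucc) ∈ U ∧ z (Fin.last n) = f (z ∘ Fin.castSucc)}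

/-- `K` has definable Skolem functions. -/
def HasDSF : Prop :=
  ∀ (m n : ℕ) (A : Set (Fin (m + n) → K)), Set.Definable (Set.univ : Set K) L A →
    ∃ f : (Fin m → K) → (Fin n → K),
      DefFunGraphOn L K (Set.univ : Set (Fin m → K)) f ∧
      ∀ x : Fin m → K, (∃ y : Fin n → K, Fin.append x y ∈ A) → Fin.append x (f x) ∈ A

/-- The Z-closure of `A ⊆ K`: the union of all nowhere dense subsets of `K` definable with
parameters from `A`. -/
def zcl (A : Set K) : Set K :=
  ⋃₀ {C : Set K | IsNwd C ∧ Set.Definable₁ A L C}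

/-- A pseudo-ℕ set: a definable subset of the nonnegative part of `K` that is closed, discrete
and unbounded above. -/
def IsPseudoNat (N : Set K) : Prop :=
  Set.Definable₁ (Set.univ : Set K) L N ∧ N ⊆ {x : K | 0 ≤ x} ∧
    IsClosed N ∧ IsDiscreteSet N ∧ ¬ BddAbove N

/-- The graph of `f` restricted to `N ⊆ K` is definable. -/
def DefFunOn1 (N : Set K) (f : K → K) : Prop :=
  Set.Definable (Set.univ : Set K) L {x : Fin 2 → K | x 0 ∈ N ∧ x 1 = f (x 0)}

/-- A subset of `K` is pseudo-enumerable if it is the image of a pseudo-ℕ set under a definable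
bijection. -/
def PseudoEnumerable1 (Q : Set K) : Prop :=
  ∃ N : Set K, IsPseudoNat L K N ∧
    ∃ f : K → K, DefFunOn1 L K N f ∧ Set.InjOn f N ∧ f '' N = Q

/-- The sup-distance on `K^n`. -/
def dmax {n : ℕ} (x y : Fin n → K) : K :=
  Finset.univ.fold max 0 (fun i => |x i - y i|)




section Engine

variable {L K}
variable {P : Set K}

def DefR (L0 : FirstOrder.Language) (K0 : Type*) [L0.Structure K0] (P0 : Set K0) (m0 : ℕ)
    (φ0 : (Fin m0 → K0) → Prop) : Prop :=
  Set.Definable P0 L0 {x : Fin m0 → K0 | φ0 x}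

variable {m k : ℕ} {φ ψ : (Fin m → K) → Prop}

theorem DefR.congr (h : DefR L K P m φ) (e : ∀ x, φ x ↔ ψ x) : DefR L K P m ψ := by
  have : {x : Fin m → K | φ x} = {x | ψ x} := Set.ext e
  unfold DefR at *
  rwa [this] at h

theorem DefR.and (h1 : DefR L K P m φ) (h2 : DefR L K P m ψ) :
    DefR L K P m (fun x => φ x ∧ ψ x) := h1.inter h2

theorem DefR.or (h1 : DefR L K P m φ) (h2 : DefR L K P m ψ) :
    DefR L K P m (fun x => φ x ∨ ψ x) := h1.union h2

theorem DefR.not (h : DefR L K P m φ) : DefR L K P m (fun x => ¬ φ x) := h.compl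

theorem DefR.imp (h1 : DefR L K P m φ) (h2 : DefR L K P m ψ) :
    DefR L K P m (fun x => φ x → ψ x) :=
  (h1.not.or h2).congr (by intro x; rw [or_iff_not_imp_left, not_not])

theorem DefR.subst {φ0 : (Fin k → K) → Prop} (h : DefR L K P k φ0) (f : Fin k → Fin m) :
    DefR L K P m (fun x => φ0 (x ∘ f)) :=
  Set.Definable.preimage_comp f h

theorem DefR.ex {φ : (Fin (m + 1) → K) → Prop} (h : DefR L K P (m + 1) φ) :
    DefR L K P m (fun x => ∃ t, φ (Fin.snoc x t)) := by
  have himg := Set.Definable.image_comp h (Fin.castSucc : Fin m → Fin (m + 1))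
  have : ((fun g : Fin (m+1) → K => g ∘ Fin.castSucc) '' {y | φ y})
      = {x : Fin m → K | ∃ t, φ (Fin.snoc x t)} := by
    ext x
    constructor
    · rintro ⟨y, hy, rfl⟩
      exact ⟨y (Fin.last m), by rwa [show (Fin.snoc (y ∘ Fin.castSucc) (y (Fin.last m))) = y from
        Fin.snoc_init_self y]⟩
    · rintro ⟨t, ht⟩
      exact ⟨Fin.snoc x t, ht, Fin.snoc_comp_castSucc⟩
  rwa [this] at himg

theorem DefR.all {φ : (Fin (m + 1) → K) → Prop} (h : DefR L K P (m + 1) φ) :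
    DefR L K P m (fun x => ∀ t, φ (Fin.snoc x t)) := by
  have := h.not.ex.not
  exact this.congr (by intro x; push_neg; rfl)

theorem DefR.exVec {k : ℕ} {φ : (Fin (m + k) → K) → Prop} (h : DefR L K P (m + k) φ) :
    DefR L K P m (fun x => ∃ y : Fin k → K, φ (Fin.append x y)) := by
  induction k with
  | zero =>
    refine DefR.congr h (fun x => ⟨fun hx => ⟨Fin.elim0, ?_⟩, fun ⟨y, hy⟩ => ?_⟩)
    · have : Fin.append x (Fin.elim0 : Fin 0 → K) = x := by
        funext i; rw [Fin.append_elim0]; rfl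
      rwa [this]
    · have : Fin.append x y = x := by
        rw [Subsingleton.elim y (Fin.elim0 : Fin 0 → K)]
        funext i; rw [Fin.append_elim0]; rfl
      rwa [this] at hy
  | succ k ih =>
    have h' : DefR L K P (m + k) (fun z => ∃ t, φ (Fin.snoc z t)) := DefR.ex h
    refine (ih h').congr (fun x => ⟨?_, ?_⟩)
    · rintro ⟨y, t, hyt⟩
      exact ⟨Fin.snoc y t, by rwa [Fin.append_snoc]⟩
    · rintro ⟨y, hy⟩
      refine ⟨y ∘ Fin.castSucc, y (Fin.last k), ?_⟩
      rw [← Fin.append_snoc]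
      rwa [show (Fin.snoc (y ∘ Fin.castSucc) (y (Fin.last k))) = y from Fin.snoc_init_self y]

theorem DefR.allVec {k : ℕ} {φ : (Fin (m + k) → K) → Prop} (h : DefR L K P (m + k) φ) :
    DefR L K P m (fun x => ∀ y : Fin k → K, φ (Fin.append x y)) := by
  have := h.not.exVec.not
  exact this.congr (by intro x; push_neg; rfl)

theorem defR_finAll {r : ℕ} {φ : Fin r → (Fin m → K) → Prop}
    (h : ∀ i, DefR L K P m (φ i)) : DefR L K P m (fun x => ∀ i, φ i x) := by
  have := Set.definable_biInter_finset (f := fun i => {x : Fin m → K | φ i x}) h Finset.univ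
  have he : (⋂ i ∈ Finset.univ, {x : Fin m → K | φ i x}) = {x : Fin m → K | ∀ i, φ i x} := by
    ext x; simp
  rwa [he] at this

theorem defR_mem {S : Set (Fin k → K)} (hS : Set.Definable P L S) (f : Fin k → Fin m) :
    DefR L K P m (fun x => (x ∘ f) ∈ S) := by
  have : DefR L K P k (fun y => y ∈ S) := by
    unfold DefR; rwa [Set.setOf_mem_eq]
  exact this.subst f

end Engine

section Atoms

variable {L K}
variable {P : Set K}
variable (hexp : IsOrderedFieldExpansion L K)
variable {m : ℕ}

include hexp

theorem defR_lt (i j : Fin m) : DefR L K P m (fun x => x i < x j) := by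
  have := defR_mem (hexp.1.mono (Set.empty_subset P)) (m := m) ![i, j]
  exact this.congr (by intro x; simp)

theorem defR_add (i j k : Fin m) : DefR L K P m (fun x => x i + x j = x k) := by
  have := defR_mem (hexp.2.1.mono (Set.empty_subset P)) (m := m) ![i, j, k]
  exact this.congr (by intro x; simp)

theorem defR_mul (i j k : Fin m) : DefR L K P m (fun x => x i * x j = x k) := by
  have := defR_mem (hexp.2.2.mono (Set.empty_subset P)) (m := m) ![i, j, k]
  exact this.congr (by intro x; simp)

theorem defR_le (i j : Fin m) : DefR L K P m (fun x => x i ≤ x j) :=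
  (defR_lt hexp j i).not.congr (by intro x; exact not_lt)

theorem defR_eq (i j : Fin m) : DefR L K P m (fun x => x i = x j) :=
  ((defR_le hexp i j).and (defR_le hexp j i)).congr (by intro x; exact le_antisymm_iff.symm)

theorem defR_zero (i : Fin m) : DefR L K P m (fun x => x i = 0) :=
  (defR_add hexp i i i).congr (by intro x; exact add_eq_left)

theorem defR_one (i : Fin m) : DefR L K P m (fun x => x i = 1) := by
  have inner : DefR L K P (m+1) (fun z => z (Fin.last m) = 0 ∧ z (Fin.last m) < z (i.castSucc)) :=
    (defR_zero hexp _).and (defR_lt hexp _ _)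
  have h := ((defR_mul hexp i i i).and inner.ex)
  refine h.congr (fun x => ?_)
  simp only [Fin.snoc_last, Fin.snoc_castSucc]
  constructor
  · rintro ⟨hm, t, rfl, ht⟩
    exact mul_left_cancel₀ (ne_of_gt ht) (by rw [hm, mul_one])
  · intro h1
    exact ⟨by rw [h1]; ring, 0, rfl, by rw [h1]; exact one_pos⟩

theorem defR_zeroLt (i : Fin m) : DefR L K P m (fun x => 0 < x i) := by
  have inner : DefR L K P (m+1) (fun z => z (Fin.last m) = 0 ∧ z (Fin.last m) < z (i.castSucc)) :=
    (defR_zero hexp _).and (defR_lt hexp _ _)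
  refine inner.ex.congr (fun x => ?_)
  simp only [Fin.snoc_last, Fin.snoc_castSucc]
  exact ⟨fun ⟨t, ht, hlt⟩ => ht ▸ hlt, fun h => ⟨0, rfl, h⟩⟩

theorem defR_addEq0 (i j : Fin m) : DefR L K P m (fun x => x i + x j = 0) := by
  have inner : DefR L K P (m+1)
      (fun z => z (i.castSucc) + z (j.castSucc) = z (Fin.last m) ∧ z (Fin.last m) = 0) :=
    (defR_add hexp _ _ _).and (defR_zero hexp _)
  refine inner.ex.congr (fun x => ?_)
  simp only [Fin.snoc_last, Fin.snoc_castSucc]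
  exact ⟨fun ⟨t, ht, h0⟩ => by rw [ht, h0], fun h => ⟨0, h, rfl⟩⟩

theorem defR_absLe (i j : Fin m) : DefR L K P m (fun x => |x i| ≤ x j) := by
  have inner : DefR L K P (m+1)
      (fun z => z (Fin.last m) + z (j.castSucc) = 0 ∧ z (Fin.last m) ≤ z (i.castSucc)) :=
    (defR_addEq0 hexp _ _).and (defR_le hexp _ _)
  refine ((defR_le hexp i j).and inner.ex).congr (fun x => ?_)
  simp only [Fin.snoc_last, Fin.snoc_castSucc]
  constructor
  · rintro ⟨h1, t, ht, h2⟩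
    have : t = -x j := by linarith
    rw [this] at h2
    exact abs_le.mpr ⟨by linarith, h1⟩
  · intro h
    rcases abs_le.mp h with ⟨h1, h2⟩
    exact ⟨h2, -x j, by ring, by linarith⟩

theorem defR_distLt (i j e : Fin m) : DefR L K P m (fun x => |x i - x j| < x e) := by
  have inner2 :=
    (defR_addEq0 (P := P) hexp (Fin.last (m+1)) ((Fin.last m).castSucc)).and
      (defR_lt hexp (Fin.last (m+1)) (e.castSucc.castSucc))
  have inner :=
    ((defR_add (P := P) hexp (j.castSucc) (Fin.last m) (i.castSucc)).and
      (defR_lt hexp (Fin.last m) (e.castSucc))).and inner2.ex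
  refine inner.ex.congr (fun x => ?_)
  simp only [Fin.snoc_last, Fin.snoc_castSucc]
  constructor
  · rintro ⟨d, ⟨hd, h1⟩, t, ht, h2⟩
    have hdd : d = x i - x j := by linarith
    have htt : t = -d := by linarith
    rw [htt, hdd] at h2
    rw [hdd] at h1
    exact abs_sub_lt_iff.mpr ⟨h1, by linarith⟩
  · intro h
    rcases abs_sub_lt_iff.mp h with ⟨h1, h2⟩
    exact ⟨x i - x j, ⟨by ring, h1⟩, -(x i - x j), by ring, by linarith⟩

theorem defR_oneLe (i : Fin m) : DefR L K P m (fun x => 1 ≤ x i) := by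
  have inner : DefR L K P (m+1)
      (fun z => z (Fin.last m) = 1 ∧ z (Fin.last m) ≤ z (i.castSucc)) :=
    (defR_one hexp _).and (defR_le hexp _ _)
  refine inner.ex.congr (fun x => ?_)
  simp only [Fin.snoc_last, Fin.snoc_castSucc]
  exact ⟨fun ⟨t, ht, h⟩ => ht ▸ h, fun h => ⟨1, rfl, h⟩⟩

theorem defR_lePlus (i j e : Fin m) : DefR L K P m (fun x => x i ≤ x j + x e) := by
  have inner : DefR L K P (m+1)
      (fun z => z (j.castSucc) + z (e.castSucc) = z (Fin.last m) ∧
        z (i.castSucc) ≤ z (Fin.last m)) :=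
    (defR_add hexp _ _ _).and (defR_le hexp _ _)
  refine inner.ex.congr (fun x => ?_)
  simp only [Fin.snoc_last, Fin.snoc_castSucc]
  exact ⟨fun ⟨t, ht, h⟩ => by rw [← ht] at h; exact h, fun h => ⟨x j + x e, rfl, h⟩⟩

theorem defR_lePlusOne (i j : Fin m) : DefR L K P m (fun x => x i ≤ x j + 1) := by
  have inner : DefR L K P (m+1)
      (fun z => z (Fin.last m) = 1 ∧ z (i.castSucc) ≤ z (j.castSucc) + z (Fin.last m)) :=
    (defR_one hexp _).and (defR_lePlus hexp _ _ _)
  refine inner.ex.congr (fun x => ?_)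
  simp only [Fin.snoc_last, Fin.snoc_castSucc]
  exact ⟨fun ⟨t, ht, h⟩ => ht ▸ h, fun h => ⟨1, rfl, h⟩⟩

theorem defR_oneLeMulAbs (s i j : Fin m) :
    DefR L K P m (fun x => 1 ≤ x s * |x i - x j|) := by
  -- ∃ d, (x j + d = x i) ∧ ∃ a, (0 ≤ a ∧ (a = d ∨ a + d = 0)) ∧ x s * a umm ≥ 1 via mul atom:
  -- ∃ d ∃ a ∃ p, x j + d = x i ∧ 0 ≤ a ∧ (a = d ∨ a + d = 0) ∧ x s * a = p ∧ 1 ≤ p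
  have inner3 :=
    ((((defR_add (P := P) hexp (j.castSucc.castSucc.castSucc)
        ((Fin.last m).castSucc.castSucc) (i.castSucc.castSucc.castSucc)).and
      ((defR_zeroLt hexp ((Fin.last (m+1)).castSucc)).or
        (defR_zero hexp ((Fin.last (m+1)).castSucc)))).and
      ((defR_eq hexp ((Fin.last (m+1)).castSucc) ((Fin.last m).castSucc.castSucc)).or
        (defR_addEq0 hexp ((Fin.last (m+1)).castSucc) ((Fin.last m).castSucc.castSucc)))).and
      ((defR_mul hexp (s.castSucc.castSucc.castSucc) ((Fin.last (m+1)).castSucc)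
        (Fin.last (m+2))).and
      (defR_oneLe hexp (Fin.last (m+2)))))
  have h := inner3.ex.ex.ex
  refine h.congr (fun x => ?_)
  simp only [Fin.snoc_last, Fin.snoc_castSucc]
  constructor
  · rintro ⟨d, a, p, ⟨⟨hd, h0⟩, habs⟩, hp, h1⟩
    have h0' : 0 ≤ a := by rcases h0 with h | h; exacts [le_of_lt h, le_of_eq h.symm]
    have hda : a = |d| := by
      rcases habs with h' | h'
      · rw [h']; exact (abs_of_nonneg (h' ▸ h0')).symm
      · have ha : a = -d := by linarith
        rw [ha]; exact (abs_of_nonpos (by linarith)).symm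
    have hdd : d = x i - x j := by linarith
    rw [← hdd, ← hda, hp]; exact h1
  · intro h
    refine ⟨x i - x j, |x i - x j|, x s * |x i - x j|, ⟨⟨by ring, ?_⟩, ?_⟩, rfl, h⟩
    · rcases (abs_nonneg (x i - x j)).lt_or_eq with h' | h'
      exacts [Or.inl h', Or.inr h'.symm]
    · rcases abs_choice (x i - x j) with h' | h'
      · exact Or.inl h'
      · exact Or.inr (by rw [h']; ring)

omit hexp in
theorem defR_memS_at {S : Set K} (hS : DefR L K P 1 (fun x => x 0 ∈ S)) (i : Fin m) :
    DefR L K P m (fun x => x i ∈ S) := by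
  refine (hS.subst (fun _ : Fin 1 => i)).congr (fun x => ?_)
  rfl

theorem defR_mem_upperBounds {S : Set K} (hS : DefR L K P 1 (fun x => x 0 ∈ S)) (i : Fin m) :
    DefR L K P m (fun x => x i ∈ upperBounds S) := by
  have inner : DefR L K P (m+1) (fun z => z (Fin.last m) ∈ S → z (Fin.last m) ≤ z (i.castSucc)) :=
    (defR_memS_at hS (Fin.last m)).imp (defR_le hexp _ _)
  refine inner.all.congr (fun x => ?_)
  simp only [Fin.snoc_last, Fin.snoc_castSucc]
  exact ⟨fun h s hs => h s hs, fun h s hs => h hs⟩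

theorem defR_mem_lowerBounds {S : Set K} (hS : DefR L K P 1 (fun x => x 0 ∈ S)) (i : Fin m) :
    DefR L K P m (fun x => x i ∈ lowerBounds S) := by
  have inner : DefR L K P (m+1) (fun z => z (Fin.last m) ∈ S → z (i.castSucc) ≤ z (Fin.last m)) :=
    (defR_memS_at hS (Fin.last m)).imp (defR_le hexp _ _)
  refine inner.all.congr (fun x => ?_)
  simp only [Fin.snoc_last, Fin.snoc_castSucc]
  exact ⟨fun h s hs => h s hs, fun h s hs => h hs⟩

theorem defR_isLUB_singleton {S : Set K} (hS : DefR L K P 1 (fun x => x 0 ∈ S)) {v : K}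
    (hv : IsLUB S v) : DefR L K P 1 (fun x => x 0 = v) := by
  have inner : DefR L K P 2 (fun z => z (Fin.last 1) ∈ upperBounds S →
      z ((0 : Fin 1).castSucc) ≤ z (Fin.last 1)) :=
    (defR_mem_upperBounds hexp hS (Fin.last 1)).imp (defR_le hexp _ _)
  refine (((defR_mem_upperBounds hexp hS (0 : Fin 1)).and inner.all)).congr (fun x => ?_)
  simp only [Fin.snoc_last, Fin.snoc_castSucc]
  constructor
  · rintro ⟨h1, h2⟩
    exact IsLUB.unique ⟨h1, fun z hz => h2 z hz⟩ hv
  · rintro rfl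
    exact ⟨hv.1, fun z hz => hv.2 hz⟩

theorem defR_isGLB_singleton {S : Set K} (hS : DefR L K P 1 (fun x => x 0 ∈ S)) {v : K}
    (hv : IsGLB S v) : DefR L K P 1 (fun x => x 0 = v) := by
  have inner : DefR L K P 2 (fun z => z (Fin.last 1) ∈ lowerBounds S →
      z (Fin.last 1) ≤ z ((0 : Fin 1).castSucc)) :=
    (defR_mem_lowerBounds hexp hS (Fin.last 1)).imp (defR_le hexp _ _)
  refine (((defR_mem_lowerBounds hexp hS (0 : Fin 1)).and inner.all)).congr (fun x => ?_)
  simp only [Fin.snoc_last, Fin.snoc_castSucc]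
  constructor
  · rintro ⟨h1, h2⟩
    exact IsGLB.unique ⟨h1, fun z hz => h2 z hz⟩ hv
  · rintro rfl
    exact ⟨hv.1, fun z hz => hv.2 hz⟩

end Atoms

section Topology

variable {K}

theorem exists_ball_subset {n : ℕ} {o : Set (Fin n → K)} (ho : IsOpen o) {x : Fin n → K}
    (hx : x ∈ o) : ∃ e : K, 0 < e ∧ ∀ y : Fin n → K, (∀ i, |x i - y i| < e) → y ∈ o := by
  obtain ⟨I, u, hu, hsub⟩ := isOpen_pi_iff.mp ho x hx
  have key : ∀ i : Fin n, ∃ e : K, 0 < e ∧ ∀ y : K, |x i - y| < e → (i ∈ I → y ∈ u i) := by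
    intro i
    by_cases hi : i ∈ I
    · obtain ⟨l, r, hmem, hIoo⟩ :=
        mem_nhds_iff_exists_Ioo_subset.mp ((hu i hi).1.mem_nhds (hu i hi).2)
    -- hmem : x i ∈ Ioo l r
      refine ⟨min (x i - l) (r - x i), by simp [hmem.1, hmem.2], fun y hy _ => ?_⟩
      apply hIoo
      rcases abs_sub_lt_iff.mp hy with ⟨h1, h2⟩
      have h3 := lt_of_lt_of_le h1 (min_le_left _ _)
      have h4 := lt_of_lt_of_le h2 (min_le_right _ _)
      exact ⟨by linarith, by linarith⟩
    · exact ⟨1, one_pos, fun _ _ hi' => absurd hi' hi⟩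
  choose e he0 he using key
  obtain ⟨d, hd0, hdle⟩ : ∃ d : K, 0 < d ∧ ∀ i, d ≤ e i := by
    rcases isEmpty_or_nonempty (Fin n) with hemp | hne
    · exact ⟨1, one_pos, fun i => isEmptyElim i⟩
    · refine ⟨Finset.univ.inf' Finset.univ_nonempty e, ?_, ?_⟩
      · rw [Finset.lt_inf'_iff]
        exact fun i _ => he0 i
      · exact fun i => Finset.inf'_le e (Finset.mem_univ i)
  refine ⟨d, hd0, fun y hy => hsub ?_⟩
  intro i hi
  exact he i (y i) (lt_of_lt_of_le (hy i) (hdle i)) hi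

theorem closure_eq_ball {n : ℕ} (S : Set (Fin n → K)) :
    closure S = {x | ∀ e : K, 0 < e → ∃ y ∈ S, ∀ i, |x i - y i| < e} := by
  ext x
  constructor
  · intro hx e he
    have hU : IsOpen {y : Fin n → K | ∀ i, |x i - y i| < e} := by
      have : {y : Fin n → K | ∀ i, |x i - y i| < e} =
          ⋂ i, (fun y : Fin n → K => y i) ⁻¹' (Set.Ioo (x i - e) (x i + e)) := by
        ext y
        simp only [Set.mem_setOf_eq, Set.mem_iInter, Set.mem_preimage, Set.mem_Ioo]
        constructor
        · intro h i; rcases abs_sub_lt_iff.mp (h i) with ⟨h1, h2⟩; constructor <;> linarith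
        · intro h i; rcases h i with ⟨h1, h2⟩; exact abs_sub_lt_iff.mpr ⟨by linarith, by linarith⟩
      rw [this]
      exact isOpen_iInter_of_finite fun i => (continuous_apply i).isOpen_preimage _ isOpen_Ioo
    obtain ⟨y, hy⟩ := mem_closure_iff.mp hx _ hU (by simp [he])
    exact ⟨y, hy.2, hy.1⟩
  · intro hx
    rw [mem_closure_iff]
    intro o ho hxo
    obtain ⟨e, he0, hball⟩ := exists_ball_subset ho hxo
    obtain ⟨y, hyS, hy⟩ := hx e he0
    exact ⟨y, hball y hy, hyS⟩

theorem far_from_closed {n : ℕ} {D : Set (Fin n → K)} (hD : IsClosed D) {x : Fin n → K}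
    (hx : x ∉ D) : ∃ e : K, 0 < e ∧ ∀ y ∈ D, ∃ i, e ≤ |x i - y i| := by
  obtain ⟨e, he0, hball⟩ := exists_ball_subset hD.isOpen_compl hx
  refine ⟨e, he0, fun y hy => ?_⟩
  by_contra hcon
  push_neg at hcon
  exact hball y (fun i => hcon i) hy

end Topology

section Constructible

variable {α : Type*} [TopologicalSpace α]

/-- Union of a list of locally closed pieces. -/
def LCList (l : List (Set α × Set α)) : Set α := l.foldr (fun p s => p.1 ∩ p.2 ∪ s) ∅

theorem LCList_nil : LCList ([] : List (Set α × Set α)) = ∅ := rfl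

theorem LCList_cons (p : Set α × Set α) (l : List (Set α × Set α)) :
    LCList (p :: l) = p.1 ∩ p.2 ∪ LCList l := rfl

theorem LCList_append (l1 l2 : List (Set α × Set α)) :
    LCList (l1 ++ l2) = LCList l1 ∪ LCList l2 := by
  induction l1 with
  | nil => rw [List.nil_append, LCList_nil, Set.empty_union]
  | cons p l ih => rw [List.cons_append, LCList_cons, LCList_cons, ih, Set.union_assoc]

def GoodList (l : List (Set α × Set α)) : Prop := ∀ p ∈ l, IsOpen p.1 ∧ IsClosed p.2

theorem LCList_map_inter (p : Set α × Set α) (l2 : List (Set α × Set α)) :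
    LCList (l2.map (fun q => (p.1 ∩ q.1, p.2 ∩ q.2))) = p.1 ∩ p.2 ∩ LCList l2 := by
  induction l2 with
  | nil => rw [List.map_nil, LCList_nil]; simp [LCList_nil]
  | cons q l2' ih2 =>
    rw [List.map_cons, LCList_cons, LCList_cons, ih2]
    ext z
    simp only [Set.mem_union, Set.mem_inter_iff]
    tauto

theorem lcl_inter {l1 l2 : List (Set α × Set α)} (h1 : GoodList l1) (h2 : GoodList l2) :
    ∃ l, GoodList l ∧ LCList l = LCList l1 ∩ LCList l2 := by
  induction l1 with
  | nil => exact ⟨[], fun p hp => absurd hp List.not_mem_nil, by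
      rw [LCList_nil, Set.empty_inter]⟩
  | cons p l ih =>
    obtain ⟨l', hl', hl'eq⟩ := ih (fun q hq => h1 q (List.mem_cons_of_mem p hq))
    refine ⟨l2.map (fun q => (p.1 ∩ q.1, p.2 ∩ q.2)) ++ l', fun q hq => ?_, ?_⟩
    · rcases List.mem_append.mp hq with hq | hq
      · obtain ⟨q', hq', rfl⟩ := List.mem_map.mp hq
        exact ⟨(h1 p List.mem_cons_self).1.inter (h2 q' hq').1,
          (h1 p List.mem_cons_self).2.inter (h2 q' hq').2⟩
      · exact hl' q hq
    · rw [LCList_append, hl'eq, LCList_cons]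
      rw [LCList_map_inter]
      ext z
      simp only [Set.mem_union, Set.mem_inter_iff]
      tauto

theorem lcl_compl {l : List (Set α × Set α)} (h : GoodList l) :
    ∃ l', GoodList l' ∧ LCList l' = (LCList l)ᶜ := by
  induction l with
  | nil =>
    refine ⟨[(Set.univ, Set.univ)], fun p hp => ?_, ?_⟩
    · rcases List.mem_singleton.mp hp with rfl
      exact ⟨isOpen_univ, isClosed_univ⟩
    · rw [LCList_nil, LCList_cons, LCList_nil]
      simp
  | cons p l ih =>
    obtain ⟨l', hl', hl'eq⟩ := ih (fun q hq => h q (List.mem_cons_of_mem p hq))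
    have hp := h p List.mem_cons_self
    have hcompl : GoodList [((Set.univ : Set α), p.1ᶜ), (p.2ᶜ, Set.univ)] := by
      intro q hq
      simp only [List.mem_cons, List.not_mem_nil, or_false] at hq
      rcases hq with rfl | rfl
      · exact ⟨isOpen_univ, hp.1.isClosed_compl⟩
      · exact ⟨hp.2.isOpen_compl, isClosed_univ⟩
    obtain ⟨l'', hl'', hl''eq⟩ := lcl_inter hcompl hl'
    refine ⟨l'', hl'', ?_⟩
    rw [hl''eq, hl'eq, LCList_cons, LCList_cons, LCList_cons, LCList_nil]
    ext z
    simp only [Set.mem_inter_iff, Set.mem_union, Set.mem_compl_iff, Set.mem_univ,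
      Set.union_empty, Set.mem_empty_iff_false, true_and, and_true, or_false]
    tauto

theorem IsBoolCombOpens.exists_LCList {A : Set α} (h : IsBoolCombOpens A) :
    ∃ l, GoodList l ∧ A = LCList l := by
  induction h with
  | @basic U hU =>
    refine ⟨[(U, Set.univ)], fun p hp => ?_, ?_⟩
    · rcases List.mem_singleton.mp hp with rfl
      exact ⟨hU, isClosed_univ⟩
    · rw [LCList_cons, LCList_nil]; simp
  | @compl s _ ih =>
    obtain ⟨l, hl, rfl⟩ := ih
    obtain ⟨l', hl', heq⟩ := lcl_compl hl
    exact ⟨l', hl', heq.symm⟩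
  | @union s t _ _ ihs iht =>
    obtain ⟨l1, hl1, rfl⟩ := ihs
    obtain ⟨l2, hl2, rfl⟩ := iht
    exact ⟨l1 ++ l2, fun p hp => (List.mem_append.mp hp).elim (hl1 p) (hl2 p),
      (LCList_append l1 l2).symm⟩

theorem lcl_point {l : List (Set α × Set α)} (hl : GoodList l) {A : Set α} (hA : A = LCList l)
    (hne : A.Nonempty) : ∃ x ∈ A, ∃ V, IsOpen V ∧ x ∈ V ∧ V ∩ closure A ⊆ A := by
  induction l generalizing A with
  | nil => rw [hA, LCList_nil] at hne; exact absurd hne (by simp)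
  | cons p l ih =>
    have hp := hl p List.mem_cons_self
    set B := LCList l with hB
    by_cases hc : ∃ x ∈ A, x ∉ closure B
    · obtain ⟨x, hxA, hxB⟩ := hc
      have hxUF : x ∈ p.1 ∩ p.2 := by
        rw [hA, LCList_cons] at hxA
        rcases hxA with h' | h'
        · exact h'
        · exact absurd (subset_closure h') hxB
      refine ⟨x, hxA, p.1 ∩ (closure B)ᶜ, hp.1.inter isClosed_closure.isOpen_compl,
        ⟨hxUF.1, hxB⟩, ?_⟩
      rintro z ⟨⟨hzU, hzB⟩, hzA⟩
      have : closure A ⊆ closure (p.1 ∩ p.2) ∪ closure B := by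
        rw [hA, LCList_cons]
        rw [closure_union]
      rcases this hzA with h' | h'
      · have : z ∈ p.2 := closure_minimal Set.inter_subset_right hp.2 h'
        rw [hA, LCList_cons]
        exact Or.inl ⟨hzU, this⟩
      · exact absurd h' hzB
    · push_neg at hc
      have hAB : A ⊆ closure B := hc
      have hBne : B.Nonempty := by
        rcases Set.eq_empty_or_nonempty B with h' | h'
        · rw [h', closure_empty] at hAB
          obtain ⟨x, hx⟩ := hne
          exact absurd (hAB hx) (Set.notMem_empty x)
        · exact h'
      obtain ⟨x, hxB, V, hV, hxV, hVB⟩ :=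
        ih (fun q hq => hl q (List.mem_cons_of_mem p hq)) rfl hBne
      have hBA : B ⊆ A := by rw [hA, LCList_cons]; exact fun z hz => Or.inr hz
      refine ⟨x, hBA hxB, V, hV, hxV, ?_⟩
      have : closure A ⊆ closure B := closure_minimal hAB isClosed_closure
      exact fun z hz => hBA (hVB ⟨hz.1, this hz.2⟩)

theorem IsBoolCombOpens.exists_int_point {A : Set α} (h : IsBoolCombOpens A)
    (hne : A.Nonempty) : ∃ x ∈ A, x ∉ closure (closure A \ A) := by
  obtain ⟨l, hl, hA⟩ := h.exists_LCList
  obtain ⟨x, hxA, V, hV, hxV, hVA⟩ := lcl_point hl hA hne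
  refine ⟨x, hxA, fun hx => ?_⟩
  obtain ⟨z, hzV, hz⟩ := mem_closure_iff.mp hx V hV hxV
  exact hz.2 (hVA ⟨hzV, hz.1⟩)

end Constructible

section Complete

variable {L K}
variable {P : Set K}

theorem defR_to_definable₁ {S : Set K} (h : DefR L K P 1 (fun x => x 0 ∈ S)) :
    Set.Definable₁ (Set.univ : Set K) L S :=
  Set.Definable.mono h (Set.subset_univ P)

theorem exists_isLUB_of (hdc : DefinablyComplete L K) {S : Set K}
    (hS : DefR L K P 1 (fun x => x 0 ∈ S)) (hne : S.Nonempty) (hb : BddAbove S) :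
    ∃ a, IsLUB S a :=
  hdc S (defR_to_definable₁ hS) hne hb

theorem exists_isGLB_of (hexp : IsOrderedFieldExpansion L K) (hdc : DefinablyComplete L K)
    {S : Set K} (hS : DefR L K P 1 (fun x => x 0 ∈ S)) (hne : S.Nonempty) (hb : BddBelow S) :
    ∃ a, IsGLB S a := by
  obtain ⟨b, hb'⟩ := hb
  obtain ⟨s0, hs0⟩ := hne
  obtain ⟨a, ha⟩ := exists_isLUB_of hdc (defR_mem_lowerBounds hexp hS (0 : Fin 1)) ⟨b, hb'⟩
    ⟨s0, fun t ht => ht hs0⟩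
  exact ⟨a, ⟨fun s hs => ha.2 (fun t ht => ht hs), ha.1⟩⟩

theorem DefR.mono' {m : ℕ} {φ : (Fin m → K) → Prop} {P' : Set K} (h : DefR L K P m φ)
    (hsub : P ⊆ P') : DefR L K P' m φ :=
  Set.Definable.mono h hsub

theorem defR_true {m : ℕ} : DefR L K P m (fun _ => True) := by
  unfold DefR
  rw [Set.setOf_true]
  exact Set.definable_univ

theorem defR_guard {m : ℕ} {φ : (Fin m → K) → Prop} {p : Prop}
    (h : p → DefR L K P m φ) : DefR L K P m (fun x => p → φ x) := by
  by_cases hp : p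
  · exact (h hp).congr (fun x => by simp [hp])
  · exact defR_true.congr (fun x => by simp [hp])

theorem defR_fix_fst {φp : (Fin 2 → K) → Prop} (h : DefR L K P 2 φp) (e : K) :
    DefR L K (Set.univ : Set K) 1 (fun w => φp ![e, w 0]) := by
  obtain ⟨φ, hφ⟩ := DefR.mono' h (Set.subset_univ P)
  have key : ∀ x : Fin 2 → K, φp x ↔ φ.Realize x := fun x => Set.ext_iff.mp hφ x
  classical
  set tf : Fin 2 → (L[[(Set.univ : Set K)]]).Term (Fin 1) :=
    ![(L.con (⟨e, Set.mem_univ e⟩ : (Set.univ : Set K))).term,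
      FirstOrder.Language.Term.var 0] with htf
  refine ⟨φ.subst tf, Set.ext fun w => ?_⟩
  simp only [Set.mem_setOf_eq]
  rw [key]
  unfold FirstOrder.Language.Formula.Realize
  rw [FirstOrder.Language.BoundedFormula.realize_subst]
  have harg : (fun a : Fin 2 => (tf a).realize w) = ![e, w 0] := by
    funext a
    refine Fin.cases ?_ (fun a' => ?_) a
    · simp [htf]
    · simp [htf, Subsingleton.elim a' 0]
  rw [harg]

theorem defR_leConstAdd (hexp : IsOrderedFieldExpansion L K) {m : ℕ} {c : K}
    (hc : DefR L K P 1 (fun w => w 0 = c)) (i e : Fin m) :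
    DefR L K P m (fun x => x i ≤ c + x e) := by
  have inner := ((hc.subst (fun _ : Fin 1 => Fin.last m)).and
    (defR_lePlus hexp (i.castSucc) (Fin.last m) (e.castSucc))).ex
  refine inner.congr (fun x => ?_)
  simp only [Function.comp, Fin.snoc_last, Fin.snoc_castSucc]
  exact ⟨fun ⟨t, ht, hle⟩ => by rw [ht] at hle; exact hle, fun h => ⟨c, rfl, h⟩⟩

/-- The set of values of the `jk`-th coordinate on the `ε`-fattened set. -/
def Vp {K0 : Type*} [Field K0] [LinearOrder K0] [IsStrictOrderedRing K0] {m : ℕ} (X : Set (Fin m → K0)) (c : Fin m → K0)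
    (k : ℕ) (jk : Fin m) (ε t : K0) : Prop :=
  ∃ x, (x ∈ X ∧ ∀ j : Fin m, (j : ℕ) < k → x j ≤ c j + ε) ∧ x jk = t

/-- `μ` is the greatest lower bound of the `Vp` values. -/
def Gp {K0 : Type*} [Field K0] [LinearOrder K0] [IsStrictOrderedRing K0] {m : ℕ} (X : Set (Fin m → K0)) (c : Fin m → K0)
    (k : ℕ) (jk : Fin m) (ε μ : K0) : Prop :=
  (∀ t, Vp X c k jk ε t → μ ≤ t) ∧ ∀ w, (∀ t, Vp X c k jk ε t → w ≤ t) → w ≤ μ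

theorem Gp_iff_isGLB {m : ℕ} {X : Set (Fin m → K)} {c : Fin m → K} {k : ℕ} {jk : Fin m}
    {ε μ : K} : Gp X c k jk ε μ ↔ IsGLB {t | Vp X c k jk ε t} μ :=
  ⟨fun ⟨h1, h2⟩ => ⟨fun t ht => h1 t ht, fun w hw => h2 w (fun t ht => hw ht)⟩,
    fun ⟨h1, h2⟩ => ⟨fun t ht => h1 ht, fun w hw => h2 (fun t ht => hw t ht)⟩⟩

theorem stage (hexp : IsOrderedFieldExpansion L K) (hdc : DefinablyComplete L K)
    {m : ℕ} {X : Set (Fin m → K)} (hX : DefR L K P m (fun x => x ∈ X))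
    (hne : X.Nonempty) {r : K} (hbd : ∀ x ∈ X, ∀ i, |x i| ≤ r) (k : ℕ) (hk : k ≤ m) :
    ∃ c : Fin m → K,
      (∀ j : Fin m, (j : ℕ) < k → DefR L K P 1 (fun w => w 0 = c j)) ∧
      (∀ ε : K, 0 < ε → ∃ x ∈ X, ∀ j : Fin m, (j : ℕ) < k → x j ≤ c j + ε) ∧
      (∀ δ : K, 0 < δ → ∃ ε : K, 0 < ε ∧ ε ≤ δ ∧
        ∀ x ∈ X, (∀ j : Fin m, (j : ℕ) < k → x j ≤ c j + ε) →
          ∀ j : Fin m, (j : ℕ) < k → c j - δ ≤ x j) := by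
  induction k with
  | zero =>
    exact ⟨fun _ => 0, fun j hj => absurd hj (Nat.not_lt_zero _),
      fun ε hε => hne.imp (fun x hx => ⟨hx, fun j hj => absurd hj (Nat.not_lt_zero _)⟩),
      fun δ hδ => ⟨δ, hδ, le_refl δ, fun x hx _ j hj => absurd hj (Nat.not_lt_zero _)⟩⟩
  | succ k ih =>
    obtain ⟨c, hc, hZne, hlow⟩ := ih (Nat.le_of_succ_le hk)
    set jk : Fin m := ⟨k, hk⟩ with hjkdef
    have hV : DefR L K P 2 (fun v => Vp X c k jk (v 0) (v 1)) := by
      have hmem : DefR L K P (2 + m) (fun z => (z ∘ Fin.natAdd 2) ∈ X) :=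
        hX.subst (Fin.natAdd 2)
      have hle : DefR L K P (2 + m) (fun z => ∀ j : Fin m, (j : ℕ) < k →
          z (Fin.natAdd 2 j) ≤ c j + z (Fin.castAdd m 0)) :=
        defR_finAll (fun j => defR_guard (fun hj =>
          defR_leConstAdd hexp (hc j hj) (Fin.natAdd 2 j) (Fin.castAdd m 0)))
      have heq : DefR L K P (2 + m)
          (fun z => z (Fin.natAdd 2 jk) = z (Fin.castAdd m 1)) := defR_eq hexp _ _
      refine ((hmem.and hle).and heq).exVec.congr (fun v => ?_)
      unfold Vp
      constructor
      · rintro ⟨y, ⟨hyX, hyle⟩, hyeq⟩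
        have hcomp : Fin.append v y ∘ Fin.natAdd 2 = y := funext fun i => Fin.append_right v y i
        rw [hcomp] at hyX
        simp only [Fin.append_left, Fin.append_right] at hyle hyeq
        exact ⟨y, ⟨hyX, hyle⟩, hyeq⟩
      · rintro ⟨x, ⟨hxX, hxle⟩, hxeq⟩
        have hcomp : Fin.append v x ∘ Fin.natAdd 2 = x := funext fun i => Fin.append_right v x i
        refine ⟨x, ⟨by rwa [hcomp], fun j hj => ?_⟩, ?_⟩
        · simp only [Fin.append_left, Fin.append_right]
          exact hxle j hj
        · simp only [Fin.append_left, Fin.append_right]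
          exact hxeq
    have hlb : DefR L K P 2 (fun v => ∀ t, Vp X c k jk (v 0) t → v 1 ≤ t) := by
      have inner := (hV.subst ![(0 : Fin 2).castSucc, Fin.last 2]).imp
        (defR_le hexp ((1 : Fin 2).castSucc) (Fin.last 2))
      refine inner.all.congr (fun v => ?_)
      simp only [Function.comp, Fin.snoc_last, Fin.snoc_castSucc, Matrix.cons_val_zero,
        Matrix.cons_val_one, Matrix.head_cons]
    have hG : DefR L K P 2 (fun v => Gp X c k jk (v 0) (v 1)) := by
      have inner := (hlb.subst ![(0 : Fin 2).castSucc, Fin.last 2]).imp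
        (defR_le hexp (Fin.last 2) ((1 : Fin 2).castSucc))
      refine (hlb.and inner.all).congr (fun v => ?_)
      unfold Gp
      simp only [Function.comp, Fin.snoc_last, Fin.snoc_castSucc, Matrix.cons_val_zero,
        Matrix.cons_val_one, Matrix.head_cons]
    have hVne : ∀ ε : K, 0 < ε → {t | Vp X c k jk ε t}.Nonempty := by
      intro ε hε
      obtain ⟨x, hxX, hxle⟩ := hZne ε hε
      exact ⟨x jk, x, ⟨hxX, hxle⟩, rfl⟩
    have hVbdd : ∀ ε : K, BddBelow {t | Vp X c k jk ε t} := by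
      intro ε
      refine ⟨-r, ?_⟩
      rintro t ⟨x, ⟨hxX, _⟩, rfl⟩
      exact (abs_le.mp (hbd x hxX jk)).1
    have hglb : ∀ ε : K, 0 < ε → ∃ μ, IsGLB {t | Vp X c k jk ε t} μ := by
      intro ε hε
      have h1 : DefR L K (Set.univ : Set K) 1 (fun w => w 0 ∈ {t | Vp X c k jk ε t}) :=
        (defR_fix_fst hV ε).congr (fun w => by simp)
      exact exists_isGLB_of hexp hdc h1 (hVne ε hε) (hVbdd ε)
    have hM : DefR L K P 1 (fun w => w 0 ∈ {μ | ∃ ε, 0 < ε ∧ Gp X c k jk ε μ}) := by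
      have inner := (defR_zeroLt hexp (Fin.last 1)).and
        (hG.subst ![Fin.last 1, (0 : Fin 1).castSucc])
      refine inner.ex.congr (fun w => ?_)
      simp only [Function.comp, Fin.snoc_last, Fin.snoc_castSucc, Matrix.cons_val_zero,
        Matrix.cons_val_one, Matrix.head_cons, Set.mem_setOf_eq]
    have hMne : {μ | ∃ ε, 0 < ε ∧ Gp X c k jk ε μ}.Nonempty := by
      obtain ⟨μ, hμ⟩ := hglb 1 one_pos
      exact ⟨μ, 1, one_pos, Gp_iff_isGLB.mpr hμ⟩
    have hMbdd : BddAbove {μ | ∃ ε, 0 < ε ∧ Gp X c k jk ε μ} := by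
      refine ⟨r, ?_⟩
      rintro μ ⟨ε, hε, hGp⟩
      obtain ⟨t, ht⟩ := hVne ε hε
      have h1 := hGp.1 t ht
      obtain ⟨x, ⟨hxX, _⟩, rfl⟩ := ht
      exact le_trans h1 (abs_le.mp (hbd x hxX jk)).2
    obtain ⟨cK, hcK⟩ := exists_isLUB_of hdc (hM.mono' (Set.subset_univ P)) hMne hMbdd
    have hsing : DefR L K P 1 (fun w => w 0 = cK) := defR_isLUB_singleton hexp hM hcK
    have hjne : ∀ j : Fin m, (j : ℕ) < k → j ≠ jk := by
      intro j hj hcon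
      rw [hcon, hjkdef] at hj
      exact absurd hj (lt_irrefl k)
    refine ⟨Function.update c jk cK, ?_, ?_, ?_⟩
    · intro j hj
      rcases Nat.lt_succ_iff_lt_or_eq.mp hj with hj' | hj'
      · rw [Function.update_apply, if_neg (hjne j hj')]
        exact hc j hj'
      · have hjeq : j = jk := Fin.ext hj'
        rw [hjeq, Function.update_self]
        exact hsing
    · intro ε hε
      obtain ⟨μ, hμ⟩ := hglb ε hε
      have hμle : μ ≤ cK := hcK.1 ⟨ε, hε, Gp_iff_isGLB.mpr hμ⟩
      have hex : ∃ t ∈ {t | Vp X c k jk ε t}, t < μ + ε := by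
        by_contra hcon
        push_neg at hcon
        have hlb' : μ + ε ∈ lowerBounds {t | Vp X c k jk ε t} := fun t ht => hcon t ht
        have := hμ.2 hlb'
        linarith
      obtain ⟨t, ht, htlt⟩ := hex
      obtain ⟨x, ⟨hxX, hxle⟩, rfl⟩ := ht
      refine ⟨x, hxX, fun j hj => ?_⟩
      rcases Nat.lt_succ_iff_lt_or_eq.mp hj with hj' | hj'
      · rw [Function.update_apply, if_neg (hjne j hj')]
        exact hxle j hj'
      · have hjeq : j = jk := Fin.ext hj'
        rw [hjeq, Function.update_self]
        linarith
    · intro δ hδ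
      obtain ⟨ε1, hε1, hε1δ, hlow1⟩ := hlow δ hδ
      have hex : ∃ μ ∈ {μ | ∃ ε, 0 < ε ∧ Gp X c k jk ε μ}, cK - δ < μ := by
        by_contra hcon
        push_neg at hcon
        have : cK ≤ cK - δ := hcK.2 (fun μ hμ => hcon μ hμ)
        linarith
      obtain ⟨μ, ⟨ε2, hε2, hG2⟩, hμgt⟩ := hex
      have hglb2 := Gp_iff_isGLB.mp hG2
      refine ⟨min ε1 ε2, lt_min hε1 hε2, le_trans (min_le_left _ _) hε1δ, ?_⟩
      intro x hxX hxle'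
      have hup : ∀ j : Fin m, (j : ℕ) < k → x j ≤ c j + min ε1 ε2 := by
        intro j hj
        have h' := hxle' j (Nat.lt_succ_of_lt hj)
        rwa [Function.update_apply, if_neg (hjne j hj)] at h'
      intro j hj
      rcases Nat.lt_succ_iff_lt_or_eq.mp hj with hj' | hj'
      · rw [Function.update_apply, if_neg (hjne j hj')]
        exact hlow1 x hxX
          (fun j' hj'' => le_trans (hup j' hj'') (add_le_add_right (min_le_left _ _) _)) j hj'
      · have hjeq : j = jk := Fin.ext hj'
        have hmem2 : Vp X c k jk ε2 (x jk) :=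
          ⟨x, ⟨hxX, fun j' hj'' =>
            le_trans (hup j' hj'') (add_le_add_right (min_le_right _ _) _)⟩, rfl⟩
        have := hglb2.1 hmem2
        rw [hjeq, Function.update_self]
        linarith

theorem choice_closed_bounded
    (hexp : IsOrderedFieldExpansion L K) (hdc : DefinablyComplete L K)
    {m : ℕ} {X : Set (Fin m → K)} (hX : DefR L K P m (fun x => x ∈ X))
    (hcl : IsClosed X) (hne : X.Nonempty)
    {r : K} (hbd : ∀ x ∈ X, ∀ i, |x i| ≤ r) :
    ∃ c ∈ X, Set.Definable P L ({c} : Set (Fin m → K)) := by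
  obtain ⟨c, hc, hZne, hlow⟩ := stage hexp hdc hX hne hbd m (le_refl m)
  have hcX : c ∈ X := by
    rw [← hcl.closure_eq, closure_eq_ball]
    intro e he
    obtain ⟨ε, hε, hεe, hlow'⟩ := hlow (e/2) (by positivity)
    obtain ⟨x, hxX, hxle⟩ := hZne ε hε
    refine ⟨x, hxX, fun i => ?_⟩
    have h1 : x i ≤ c i + ε := hxle i i.isLt
    have h2 : c i - e/2 ≤ x i := hlow' x hxX (fun j hj => hxle j hj) i i.isLt
    rw [abs_sub_lt_iff]
    constructor <;> linarith
  have hsing : DefR L K P m (fun x => ∀ j : Fin m, x j = c j) :=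
    defR_finAll (fun j => ((hc j j.isLt).subst (fun _ : Fin 1 => j)).congr (fun x => Iff.rfl))
  refine ⟨c, hcX, ?_⟩
  have heq : {x : Fin m → K | ∀ j, x j = c j} = {c} := by
    ext x
    rw [Set.mem_singleton_iff, Set.mem_setOf_eq, funext_iff]
  unfold DefR at hsing
  rwa [heq] at hsing

end Complete

section Main

variable {L K}
variable {P : Set K}

theorem defR_finEx {m r : ℕ} {φ : Fin r → (Fin m → K) → Prop}
    (h : ∀ i, DefR L K P m (φ i)) : DefR L K P m (fun x => ∃ i, φ i x) := by
  have h' := Set.definable_biUnion_finset (f := fun i => {x : Fin m → K | φ i x}) h Finset.univ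
  have he : (⋃ i ∈ Finset.univ, {x : Fin m → K | φ i x}) = {x : Fin m → K | ∃ i, φ i x} := by
    ext x; simp
  rwa [he] at h'

theorem defR_closure (hexp : IsOrderedFieldExpansion L K) {n : ℕ} {S : Set (Fin n → K)}
    (hS : DefR L K P n (fun x => x ∈ S)) : DefR L K P n (fun x => x ∈ closure S) := by
  have inner2 := (hS.subst (Fin.natAdd (n+1))).and (defR_finAll (fun i : Fin n =>
    defR_distLt (P := P) hexp (Fin.castAdd n i.castSucc) (Fin.natAdd (n+1) i)
      (Fin.castAdd n (Fin.last n))))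
  have inner1 := (defR_zeroLt (P := P) hexp (Fin.last n)).imp inner2.exVec
  refine inner1.all.congr (fun x => ?_)
  rw [closure_eq_ball]
  simp only [Set.mem_setOf_eq]
  constructor
  · intro h e he0
    obtain ⟨y, hyS, hy⟩ := h e (by rw [Fin.snoc_last]; exact he0)
    refine ⟨y, ?_, fun i => ?_⟩
    · have hcomp : Fin.append (Fin.snoc x e) y ∘ Fin.natAdd (n+1) = y :=
        funext fun i => Fin.append_right _ _ i
      rwa [hcomp] at hyS
    · have h' := hy i
      rwa [Fin.append_left, Fin.append_left, Fin.append_right, Fin.snoc_castSucc,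
        Fin.snoc_last] at h'
  · intro h e he0
    have he0' : (0 : K) < e := by rwa [Fin.snoc_last] at he0
    obtain ⟨y, hyS, hy⟩ := h e he0'
    refine ⟨y, ?_, fun i => ?_⟩
    · have hcomp : Fin.append (Fin.snoc x e) y ∘ Fin.natAdd (n+1) = y :=
        funext fun i => Fin.append_right _ _ i
      rwa [hcomp]
    · have h' := hy i
      rw [Fin.append_left, Fin.append_left, Fin.append_right, Fin.snoc_castSucc, Fin.snoc_last]
      exact h'

theorem statement11' (hexp : IsOrderedFieldExpansion L K) (hdc : DefinablyComplete L K)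
    {n : ℕ} {A : Set (Fin n → K)}
    (hA : Set.Definable P L A) (hne : A.Nonempty) (hcon : IsBoolCombOpens A) :
    ∃ a ∈ A, Set.Definable P L ({a} : Set (Fin n → K)) := by
  classical
  have hA' : DefR L K P n (fun x => x ∈ A) := by
    unfold DefR; rwa [Set.setOf_mem_eq]
  have hclA : DefR L K P n (fun x => x ∈ closure A) := defR_closure hexp hA'
  set D : Set (Fin n → K) := closure (closure A \ A) with hDdef
  have hE : DefR L K P n (fun x => x ∈ closure A \ A) :=
    (hclA.and hA'.not).congr (fun x => by rw [Set.mem_diff])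
  have hD : DefR L K P n (fun y => y ∈ D) := defR_closure hexp hE
  -- the point in the relative interior
  obtain ⟨x0, hx0A, hx0D⟩ := hcon.exists_int_point hne
  obtain ⟨δ, hδ0, hδfar⟩ := far_from_closed isClosed_closure hx0D
  -- the definable predicate for C
  have hC : DefR L K P (n+1) (fun z => (1 ≤ z (Fin.last n) ∧ (z ∘ Fin.castSucc) ∈ closure A) ∧
      (∀ i : Fin n, |z (i.castSucc)| ≤ z (Fin.last n)) ∧
      (∀ y : Fin n → K, y ∈ D → ∃ i : Fin n,
        1 ≤ z (Fin.last n) * |z (i.castSucc) - y i|)) := by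
    have h1 : DefR L K P (n+1) (fun z => 1 ≤ z (Fin.last n)) := defR_oneLe hexp _
    have h2 : DefR L K P (n+1) (fun z => (z ∘ Fin.castSucc) ∈ closure A) :=
      hclA.subst Fin.castSucc
    have h3 : DefR L K P (n+1) (fun z => ∀ i : Fin n, |z (i.castSucc)| ≤ z (Fin.last n)) :=
      defR_finAll (fun i => defR_absLe hexp _ _)
    have h4inner := (hD.subst (Fin.natAdd (n+1))).imp (defR_finEx (fun i : Fin n =>
      defR_oneLeMulAbs (P := P) hexp (Fin.castAdd n (Fin.last n)) (Fin.castAdd n i.castSucc)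
        (Fin.natAdd (n+1) i)))
    have h4 := h4inner.allVec
    refine ((h1.and h2).and (h3.and h4)).congr (fun z => ?_)
    constructor
    · rintro ⟨⟨ha, hb⟩, hcc, hd⟩
      refine ⟨⟨ha, hb⟩, hcc, fun y hy => ?_⟩
      have h' := hd y
      have hcomp : Fin.append z y ∘ Fin.natAdd (n+1) = y := funext fun i => Fin.append_right _ _ i
      rw [hcomp] at h'
      obtain ⟨i, hi⟩ := h' hy
      rw [Fin.append_left, Fin.append_left, Fin.append_right] at hi
      exact ⟨i, hi⟩
    · rintro ⟨⟨ha, hb⟩, hcc, hd⟩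
      refine ⟨⟨ha, hb⟩, hcc, fun y => ?_⟩
      have hcomp : Fin.append z y ∘ Fin.natAdd (n+1) = y := funext fun i => Fin.append_right _ _ i
      rw [hcomp]
      intro hy
      obtain ⟨i, hi⟩ := hd y hy
      refine ⟨i, ?_⟩
      rw [Fin.append_left, Fin.append_left, Fin.append_right]
      exact hi
  -- the set of admissible scales
  have hP : DefR L K P 1 (fun w => w 0 ∈ {t | ∃ z : Fin (n+1) → K,
      ((1 ≤ z (Fin.last n) ∧ (z ∘ Fin.castSucc) ∈ closure A) ∧
      (∀ i : Fin n, |z (i.castSucc)| ≤ z (Fin.last n)) ∧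
      (∀ y : Fin n → K, y ∈ D → ∃ i : Fin n,
        1 ≤ z (Fin.last n) * |z (i.castSucc) - y i|)) ∧ z (Fin.last n) = t}) := by
    have inner := (hC.subst (Fin.natAdd 1)).and
      (defR_eq (P := P) hexp (Fin.natAdd 1 (Fin.last n)) (Fin.castAdd (n+1) 0))
    refine inner.exVec.congr (fun w => ?_)
    simp only [Set.mem_setOf_eq]
    constructor
    · rintro ⟨y, hy1, hy2⟩
      have hcomp : Fin.append w y ∘ Fin.natAdd 1 = y := funext fun i => Fin.append_right _ _ i
      rw [hcomp] at hy1
      rw [Fin.append_right, Fin.append_left] at hy2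
      exact ⟨y, hy1, hy2⟩
    · rintro ⟨z, hz1, hz2⟩
      refine ⟨z, ?_, ?_⟩
      · have hcomp : Fin.append w z ∘ Fin.natAdd 1 = z := funext fun i => Fin.append_right _ _ i
        rwa [hcomp]
      · rw [Fin.append_right, Fin.append_left]
        exact hz2
  -- nonemptiness of the scale set
  obtain ⟨B, hB'⟩ := (Set.finite_range (fun i : Fin n => |x0 i|)).bddAbove
  have hB : ∀ i, |x0 i| ≤ B := fun i => hB' ⟨i, rfl⟩
  set s0 : K := max 1 (max (1/δ) B) with hs0def
  have hz0C : ((1 ≤ (Fin.snoc x0 s0 : Fin (n+1) → K) (Fin.last n) ∧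
      ((Fin.snoc x0 s0 : Fin (n+1) → K) ∘ Fin.castSucc) ∈ closure A) ∧
      (∀ i : Fin n, |(Fin.snoc x0 s0 : Fin (n+1) → K) (i.castSucc)| ≤
        (Fin.snoc x0 s0 : Fin (n+1) → K) (Fin.last n)) ∧
      (∀ y : Fin n → K, y ∈ D → ∃ i : Fin n,
        1 ≤ (Fin.snoc x0 s0 : Fin (n+1) → K) (Fin.last n) *
          |(Fin.snoc x0 s0 : Fin (n+1) → K) (i.castSucc) - y i|)) := by
    have h1δ : 1/δ ≤ s0 := le_trans (le_max_left _ _) (le_max_right _ _)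
    have hs0pos : (0 : K) ≤ s0 := le_trans (le_of_lt (by positivity)) h1δ
    refine ⟨⟨?_, ?_⟩, ?_, ?_⟩
    · rw [Fin.snoc_last]; exact le_max_left _ _
    · rw [Fin.snoc_comp_castSucc]; exact subset_closure hx0A
    · intro i
      rw [Fin.snoc_last, Fin.snoc_castSucc]
      exact le_trans (hB i) (le_trans (le_max_right _ _) (le_max_right _ _))
    · intro y hy
      obtain ⟨i, hi⟩ := hδfar y hy
      refine ⟨i, ?_⟩
      rw [Fin.snoc_last, Fin.snoc_castSucc]
      calc (1 : K) = (1/δ) * δ := (one_div_mul_cancel hδ0.ne').symm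
        _ ≤ s0 * |x0 i - y i| := mul_le_mul h1δ hi (le_of_lt hδ0) hs0pos
  have hPne : {t | ∃ z : Fin (n+1) → K,
      ((1 ≤ z (Fin.last n) ∧ (z ∘ Fin.castSucc) ∈ closure A) ∧
      (∀ i : Fin n, |z (i.castSucc)| ≤ z (Fin.last n)) ∧
      (∀ y : Fin n → K, y ∈ D → ∃ i : Fin n,
        1 ≤ z (Fin.last n) * |z (i.castSucc) - y i|)) ∧ z (Fin.last n) = t}.Nonempty := by
    refine ⟨(Fin.snoc x0 s0 : Fin (n+1) → K) (Fin.last n), ?_⟩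
    exact ⟨Fin.snoc x0 s0, hz0C, rfl⟩
  have hPbdd : BddBelow {t | ∃ z : Fin (n+1) → K,
      ((1 ≤ z (Fin.last n) ∧ (z ∘ Fin.castSucc) ∈ closure A) ∧
      (∀ i : Fin n, |z (i.castSucc)| ≤ z (Fin.last n)) ∧
      (∀ y : Fin n → K, y ∈ D → ∃ i : Fin n,
        1 ≤ z (Fin.last n) * |z (i.castSucc) - y i|)) ∧ z (Fin.last n) = t} := by
    refine ⟨1, ?_⟩
    rintro t ⟨z, hz, rfl⟩
    exact hz.1.1
  obtain ⟨sstar, hsstar⟩ := exists_isGLB_of hexp hdc hP hPne hPbdd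
  have hsing : DefR L K P 1 (fun w => w 0 = sstar) := defR_isGLB_singleton hexp hP hsstar
  -- the closed bounded definable set X
  have hXdef : DefR L K P (n+1) (fun z =>
      (((1 ≤ z (Fin.last n) ∧ (z ∘ Fin.castSucc) ∈ closure A) ∧
      (∀ i : Fin n, |z (i.castSucc)| ≤ z (Fin.last n)) ∧
      (∀ y : Fin n → K, y ∈ D → ∃ i : Fin n,
        1 ≤ z (Fin.last n) * |z (i.castSucc) - y i|)) ∧ z (Fin.last n) ≤ sstar + 1)) := by
    have inner := ((hsing.subst (fun _ : Fin 1 => Fin.last (n+1))).and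
      (defR_lePlusOne (P := P) hexp ((Fin.last n).castSucc) (Fin.last (n+1)))).ex
    refine (hC.and (inner.congr (fun z => ?_))).congr (fun z => Iff.rfl)
    simp only [Function.comp, Fin.snoc_last, Fin.snoc_castSucc]
    exact ⟨fun ⟨t, ht, hle⟩ => by rw [ht] at hle; exact hle, fun h => ⟨sstar, rfl, h⟩⟩
  have hXcl : IsClosed {z : Fin (n+1) → K |
      (((1 ≤ z (Fin.last n) ∧ (z ∘ Fin.castSucc) ∈ closure A) ∧
      (∀ i : Fin n, |z (i.castSucc)| ≤ z (Fin.last n)) ∧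
      (∀ y : Fin n → K, y ∈ D → ∃ i : Fin n,
        1 ≤ z (Fin.last n) * |z (i.castSucc) - y i|)) ∧ z (Fin.last n) ≤ sstar + 1)} := by
    simp only [Set.setOf_and]
    refine IsClosed.inter (IsClosed.inter (IsClosed.inter ?_ ?_) (IsClosed.inter ?_ ?_)) ?_
    · exact isClosed_le continuous_const (continuous_apply _)
    · exact IsClosed.preimage (continuous_pi fun i => continuous_apply (i.castSucc))
        isClosed_closure
    · rw [Set.setOf_forall]
      exact isClosed_iInter fun i =>
        isClosed_le ((continuous_apply (i.castSucc)).abs) (continuous_apply _)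
    · rw [Set.setOf_forall]
      refine isClosed_iInter fun y => ?_
      by_cases hy : y ∈ D
      · have heq : {z : Fin (n+1) → K | y ∈ D → ∃ i : Fin n,
            1 ≤ z (Fin.last n) * |z (i.castSucc) - y i|} =
            ⋃ i : Fin n, {z : Fin (n+1) → K | 1 ≤ z (Fin.last n) * |z (i.castSucc) - y i|} := by
          ext z; simp [hy]
        rw [heq]
        exact isClosed_iUnion_of_finite fun i => isClosed_le continuous_const
          ((continuous_apply (Fin.last n)).mul
            (((continuous_apply (i.castSucc)).sub continuous_const).abs))
      · have heq : {z : Fin (n+1) → K | y ∈ D → ∃ i : Fin n,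
            1 ≤ z (Fin.last n) * |z (i.castSucc) - y i|} = Set.univ := by
          ext z; simp [hy]
        rw [heq]
        exact isClosed_univ
    · exact isClosed_le (continuous_apply _) continuous_const
  have hXbd : ∀ z ∈ {z : Fin (n+1) → K |
      (((1 ≤ z (Fin.last n) ∧ (z ∘ Fin.castSucc) ∈ closure A) ∧
      (∀ i : Fin n, |z (i.castSucc)| ≤ z (Fin.last n)) ∧
      (∀ y : Fin n → K, y ∈ D → ∃ i : Fin n,
        1 ≤ z (Fin.last n) * |z (i.castSucc) - y i|)) ∧ z (Fin.last n) ≤ sstar + 1)},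
      ∀ i : Fin (n+1), |z i| ≤ sstar + 1 := by
    rintro z ⟨⟨⟨h1, _⟩, h3, _⟩, h5⟩ i
    refine Fin.lastCases ?_ (fun i' => ?_) i
    · rw [abs_of_nonneg (le_trans zero_le_one h1)]
      exact h5
    · exact le_trans (h3 i') h5
  have hXne : {z : Fin (n+1) → K |
      (((1 ≤ z (Fin.last n) ∧ (z ∘ Fin.castSucc) ∈ closure A) ∧
      (∀ i : Fin n, |z (i.castSucc)| ≤ z (Fin.last n)) ∧
      (∀ y : Fin n → K, y ∈ D → ∃ i : Fin n,
        1 ≤ z (Fin.last n) * |z (i.castSucc) - y i|)) ∧ z (Fin.last n) ≤ sstar + 1)}.Nonempty := by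
    have hex : ∃ t ∈ {t | ∃ z : Fin (n+1) → K,
        ((1 ≤ z (Fin.last n) ∧ (z ∘ Fin.castSucc) ∈ closure A) ∧
        (∀ i : Fin n, |z (i.castSucc)| ≤ z (Fin.last n)) ∧
        (∀ y : Fin n → K, y ∈ D → ∃ i : Fin n,
          1 ≤ z (Fin.last n) * |z (i.castSucc) - y i|)) ∧ z (Fin.last n) = t},
        t < sstar + 1 := by
      by_contra hcon
      push_neg at hcon
      have hlb : sstar + 1 ∈ lowerBounds _ := fun t ht => hcon t ht
      have := hsstar.2 hlb
      linarith
    obtain ⟨t, ⟨z, hzC, rfl⟩, htlt⟩ := hex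
    exact ⟨z, hzC, le_of_lt htlt⟩
  obtain ⟨cz, hczX, hczsing⟩ := choice_closed_bounded hexp hdc hXdef hXcl hXne hXbd
  have hczA : (cz ∘ Fin.castSucc) ∈ A := by
    obtain ⟨⟨⟨h1, h2⟩, h3, h4⟩, h5⟩ := hczX
    by_contra hnA
    have hmemD : (cz ∘ Fin.castSucc) ∈ D := subset_closure ⟨h2, hnA⟩
    obtain ⟨i, hi⟩ := h4 _ hmemD
    simp only [Function.comp_apply, sub_self, abs_zero, mul_zero] at hi
    exact absurd hi (by norm_num)
  have hz : DefR L K P (n+1) (fun z => z ∈ ({cz} : Set (Fin (n+1) → K))) := by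
    unfold DefR; rwa [Set.setOf_mem_eq]
  have hfin := hz.ex
  refine ⟨cz ∘ Fin.castSucc, hczA, ?_⟩
  have heq : {x : Fin n → K | ∃ t, Fin.snoc x t ∈ ({cz} : Set (Fin (n+1) → K))} =
      {cz ∘ Fin.castSucc} := by
    ext x
    simp only [Set.mem_setOf_eq, Set.mem_singleton_iff]
    constructor
    · rintro ⟨t, ht⟩
      rw [← ht, Fin.snoc_comp_castSucc]
    · intro hx
      refine ⟨cz (Fin.last n), ?_⟩
      rw [hx]
      exact Fin.snoc_init_self cz
  unfold DefR at hfin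
  rwa [heq] at hfin

end Main



/-- definable choice for constructible sets. -/
theorem statement11
    (hexp : IsOrderedFieldExpansion L K)
    (hdc : DefinablyComplete L K)
    (P : Set K) (n : ℕ) (A : Set (Fin n → K))
    (hA : Set.Definable P L A) (hne : A.Nonempty) (hcon : IsBoolCombOpens A) :
    ∃ a ∈ A, Set.Definable P L ({a} : Set (Fin n → K)) := by
  exact statement11' hexp hdc hA hne hcon

end Tame
end

section
/- Let K be a definably complete expansion of an ordered field and let f : [0,1] → K be a definable continuous function, where [0,1] is the closed interval of K. Then f is uniformly continuous: for every ε > 0 in K there exists δ > 0 in K such that for all x, y ∈ [0,1], |x − y| < δ implies |f(x) − f(y)| < ε. -/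
open FirstOrder Set

namespace Tame

variable (L : FirstOrder.Language) (K : Type*) [Field K] [LinearOrder K] [IsStrictOrderedRing K]
  [TopologicalSpace K] [OrderTopology K] [L.Structure K]

section Helpers
set_option linter.unusedSectionVars false
variable {L K}


set_option linter.unusedSectionVars false
private lemma def_eq_const {n : ℕ} (i : Fin n) (c : K) :
    Set.Definable (univ : Set K) L {g : Fin n → K | g i = c} := by
  refine ⟨FirstOrder.Language.Term.equal (FirstOrder.Language.Term.var i)
    ((L.con (⟨c, Set.mem_univ c⟩ : (univ : Set K))).term), ?_⟩
  ext g
  simp [FirstOrder.Language.Formula.realize_equal, FirstOrder.Language.Term.realize_con]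

private lemma def_exists {n : ℕ} {s : Set (Fin (n + 1) → K)}
    (h : Set.Definable (univ : Set K) L s) :
    Set.Definable (univ : Set K) L {g : Fin n → K | ∃ a : K, (Fin.cons a g : Fin (n+1) → K) ∈ s} := by
  have h2 := h.image_comp (Fin.succ : Fin n → Fin (n + 1))
  convert h2 using 1
  ext g
  simp only [Set.mem_image, Set.mem_setOf_eq]
  constructor
  · rintro ⟨a, ha⟩
    exact ⟨Fin.cons a g, ha, by ext i; simp⟩
  · rintro ⟨h', hh', rfl⟩
    exact ⟨h' 0, by rwa [show (Fin.cons (h' 0) ((fun g : Fin (n+1) → K => g ∘ Fin.succ) h') : Fin (n+1) → K) = h' from Fin.cons_self_tail h']⟩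

private lemma def_forall {n : ℕ} {s : Set (Fin (n + 1) → K)}
    (h : Set.Definable (univ : Set K) L s) :
    Set.Definable (univ : Set K) L {g : Fin n → K | ∀ a : K, (Fin.cons a g : Fin (n+1) → K) ∈ s} := by
  have h2 := (def_exists h.compl).compl
  convert h2 using 1
  ext g
  simp

private lemma def_lt (hlt : Set.Definable (∅ : Set K) L {x : Fin 2 → K | x 0 < x 1})
    {n : ℕ} (i j : Fin n) :
    Set.Definable (univ : Set K) L {g : Fin n → K | g i < g j} := by
  have h := (hlt.mono (Set.empty_subset (Set.univ : Set K))).preimage_comp (![i, j] : Fin 2 → Fin n)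
  convert h using 1
  rfl

private lemma def_le (hlt : Set.Definable (∅ : Set K) L {x : Fin 2 → K | x 0 < x 1})
    {n : ℕ} (i j : Fin n) :
    Set.Definable (univ : Set K) L {g : Fin n → K | g i ≤ g j} := by
  have h := (def_lt hlt j i).compl
  convert h using 1
  ext g
  simp

private lemma def_const_lt (hlt : Set.Definable (∅ : Set K) L {x : Fin 2 → K | x 0 < x 1})
    {n : ℕ} (c : K) (i : Fin n) :
    Set.Definable (univ : Set K) L {g : Fin n → K | c < g i} := by
  have h := def_exists ((def_eq_const (0 : Fin (n+1)) c).inter (def_lt hlt 0 i.succ))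
  convert h using 1
  ext g
  constructor
  · intro hg
    exact ⟨c, rfl, by simpa [Fin.cons_succ] using hg⟩
  · rintro ⟨a, ha, hlt'⟩
    simp only [Set.mem_setOf_eq, Fin.cons_zero] at ha
    simpa [Fin.cons_succ, ha] using hlt'

private lemma def_le_const (hlt : Set.Definable (∅ : Set K) L {x : Fin 2 → K | x 0 < x 1})
    {n : ℕ} (i : Fin n) (c : K) :
    Set.Definable (univ : Set K) L {g : Fin n → K | g i ≤ c} := by
  have h := (def_const_lt hlt c i).compl
  convert h using 1
  ext g
  simp

private lemma def_const_le (hlt : Set.Definable (∅ : Set K) L {x : Fin 2 → K | x 0 < x 1})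
    {n : ℕ} (c : K) (i : Fin n) :
    Set.Definable (univ : Set K) L {g : Fin n → K | c ≤ g i} := by
  have h := def_exists ((def_eq_const (0 : Fin (n+1)) c).inter (def_le hlt 0 i.succ))
  convert h using 1
  ext g
  constructor
  · intro hg
    exact ⟨c, rfl, by simpa [Fin.cons_succ] using hg⟩
  · rintro ⟨a, ha, hle⟩
    simp only [Set.mem_setOf_eq, Fin.cons_zero] at ha
    simpa [Fin.cons_succ, ha] using hle

private lemma def_add (hadd : Set.Definable (∅ : Set K) L {x : Fin 3 → K | x 0 + x 1 = x 2})
    {n : ℕ} (i j k : Fin n) :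
    Set.Definable (univ : Set K) L {g : Fin n → K | g i + g j = g k} := by
  have h := (hadd.mono (Set.empty_subset (Set.univ : Set K))).preimage_comp (![i, j, k] : Fin 3 → Fin n)
  convert h using 1
  rfl

private lemma def_lt_add (hlt : Set.Definable (∅ : Set K) L {x : Fin 2 → K | x 0 < x 1})
    (hadd : Set.Definable (∅ : Set K) L {x : Fin 3 → K | x 0 + x 1 = x 2})
    {n : ℕ} (i j k : Fin n) :
    Set.Definable (univ : Set K) L {g : Fin n → K | g i < g j + g k} := by
  have h := def_exists ((def_add hadd j.succ k.succ 0).inter (def_lt hlt i.succ 0))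
  convert h using 1
  ext g
  constructor
  · intro hg
    exact ⟨g j + g k, by simp [Fin.cons_succ], by simpa [Fin.cons_succ] using hg⟩
  · rintro ⟨a, ha, hlt'⟩
    simp only [Set.mem_setOf_eq, Fin.cons_succ, Fin.cons_zero] at ha hlt'
    simpa [← ha] using hlt'

private lemma def_lt_add_const (hlt : Set.Definable (∅ : Set K) L {x : Fin 2 → K | x 0 < x 1})
    (hadd : Set.Definable (∅ : Set K) L {x : Fin 3 → K | x 0 + x 1 = x 2})
    {n : ℕ} (i j : Fin n) (c : K) :
    Set.Definable (univ : Set K) L {g : Fin n → K | g i < g j + c} := by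
  have h := def_exists ((def_eq_const (0 : Fin (n+1)) c).inter
    (def_lt_add hlt hadd i.succ j.succ 0))
  convert h using 1
  ext g
  constructor
  · intro hg
    exact ⟨c, rfl, by simpa [Fin.cons_succ] using hg⟩
  · rintro ⟨a, ha, hlt'⟩
    simp only [Set.mem_setOf_eq, Fin.cons_zero] at ha
    simp only [Set.mem_setOf_eq, Fin.cons_succ, Fin.cons_zero] at hlt'
    simpa [ha] using hlt'

private lemma def_graph {f : K → K}
    (hf : Set.Definable (univ : Set K) L {x : Fin 2 → K | x 0 ∈ Set.Icc (0:K) 1 ∧ x 1 = f (x 0)})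
    {n : ℕ} (i j : Fin n) :
    Set.Definable (univ : Set K) L {g : Fin n → K | g i ∈ Set.Icc (0:K) 1 ∧ g j = f (g i)} := by
  have h := hf.preimage_comp (![i, j] : Fin 2 → Fin n)
  convert h using 1
  rfl

private lemma key_def (hlt : Set.Definable (∅ : Set K) L {x : Fin 2 → K | x 0 < x 1})
    (hadd : Set.Definable (∅ : Set K) L {x : Fin 3 → K | x 0 + x 1 = x 2})
    {f : K → K}
    (hf : Set.Definable (univ : Set K) L {x : Fin 2 → K | x 0 ∈ Set.Icc (0:K) 1 ∧ x 1 = f (x 0)})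
    (ε : K) :
    Set.Definable₁ (univ : Set K) L
      {t : K | 0 ≤ t ∧ t ≤ 1 ∧ ∃ δ : K, 0 < δ ∧ ∀ x y u v : K,
        (0 ≤ x ∧ x ≤ t ∧ 0 ≤ y ∧ y ≤ t ∧ (x ∈ Set.Icc (0:K) 1 ∧ u = f x) ∧
          (y ∈ Set.Icc (0:K) 1 ∧ v = f y) ∧ x < y + δ ∧ y < x + δ) → (u < v + ε ∧ v < u + ε)} := by
  have hD6 : Set.Definable (univ : Set K) L
      ((({g : Fin 6 → K | (0:K) ≤ g 3} ∩ {g : Fin 6 → K | g 3 ≤ g 5} ∩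
        {g : Fin 6 → K | (0:K) ≤ g 2} ∩ {g : Fin 6 → K | g 2 ≤ g 5} ∩
        {g : Fin 6 → K | g 3 ∈ Set.Icc (0:K) 1 ∧ g 1 = f (g 3)} ∩
        {g : Fin 6 → K | g 2 ∈ Set.Icc (0:K) 1 ∧ g 0 = f (g 2)} ∩
        {g : Fin 6 → K | g 3 < g 2 + g 4} ∩ {g : Fin 6 → K | g 2 < g 3 + g 4})ᶜ) ∪
        ({g : Fin 6 → K | g 1 < g 0 + ε} ∩ {g : Fin 6 → K | g 0 < g 1 + ε})) :=
    ((((((((def_const_le hlt 0 3).inter (def_le hlt 3 5)).inter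
      (def_const_le hlt 0 2)).inter (def_le hlt 2 5)).inter
      (def_graph hf 3 1)).inter (def_graph hf 2 0)).inter
      (def_lt_add hlt hadd 3 2 4)).inter (def_lt_add hlt hadd 2 3 4)).compl.union
      ((def_lt_add_const hlt hadd 1 0 ε).inter (def_lt_add_const hlt hadd 0 1 ε))
  have hD2 := def_forall (def_forall (def_forall (def_forall hD6)))
  have hD1 := def_exists ((def_const_lt hlt 0 (0 : Fin 2)).inter hD2)
  have hD0 := ((def_const_le hlt 0 (0 : Fin 1)).inter (def_le_const hlt (0 : Fin 1) 1)).inter hD1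
  show Set.Definable (univ : Set K) L _
  convert hD0 using 1
  have c10 : ∀ (a : K) (g : Fin 1 → K), (Fin.cons a g : Fin 2 → K) 0 = a := fun _ _ => rfl
  have c11 : ∀ (a : K) (g : Fin 1 → K), (Fin.cons a g : Fin 2 → K) 1 = g 0 := fun _ _ => rfl
  have c20 : ∀ (a : K) (g : Fin 2 → K), (Fin.cons a g : Fin 3 → K) 0 = a := fun _ _ => rfl
  have c21 : ∀ (a : K) (g : Fin 2 → K), (Fin.cons a g : Fin 3 → K) 1 = g 0 := fun _ _ => rfl
  have c22 : ∀ (a : K) (g : Fin 2 → K), (Fin.cons a g : Fin 3 → K) 2 = g 1 := fun _ _ => rfl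
  have c30 : ∀ (a : K) (g : Fin 3 → K), (Fin.cons a g : Fin 4 → K) 0 = a := fun _ _ => rfl
  have c31 : ∀ (a : K) (g : Fin 3 → K), (Fin.cons a g : Fin 4 → K) 1 = g 0 := fun _ _ => rfl
  have c32 : ∀ (a : K) (g : Fin 3 → K), (Fin.cons a g : Fin 4 → K) 2 = g 1 := fun _ _ => rfl
  have c33 : ∀ (a : K) (g : Fin 3 → K), (Fin.cons a g : Fin 4 → K) 3 = g 2 := fun _ _ => rfl
  have c40 : ∀ (a : K) (g : Fin 4 → K), (Fin.cons a g : Fin 5 → K) 0 = a := fun _ _ => rfl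
  have c41 : ∀ (a : K) (g : Fin 4 → K), (Fin.cons a g : Fin 5 → K) 1 = g 0 := fun _ _ => rfl
  have c42 : ∀ (a : K) (g : Fin 4 → K), (Fin.cons a g : Fin 5 → K) 2 = g 1 := fun _ _ => rfl
  have c43 : ∀ (a : K) (g : Fin 4 → K), (Fin.cons a g : Fin 5 → K) 3 = g 2 := fun _ _ => rfl
  have c44 : ∀ (a : K) (g : Fin 4 → K), (Fin.cons a g : Fin 5 → K) 4 = g 3 := fun _ _ => rfl
  have c50 : ∀ (a : K) (g : Fin 5 → K), (Fin.cons a g : Fin 6 → K) 0 = a := fun _ _ => rfl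
  have c51 : ∀ (a : K) (g : Fin 5 → K), (Fin.cons a g : Fin 6 → K) 1 = g 0 := fun _ _ => rfl
  have c52 : ∀ (a : K) (g : Fin 5 → K), (Fin.cons a g : Fin 6 → K) 2 = g 1 := fun _ _ => rfl
  have c53 : ∀ (a : K) (g : Fin 5 → K), (Fin.cons a g : Fin 6 → K) 3 = g 2 := fun _ _ => rfl
  have c54 : ∀ (a : K) (g : Fin 5 → K), (Fin.cons a g : Fin 6 → K) 4 = g 3 := fun _ _ => rfl
  have c55 : ∀ (a : K) (g : Fin 5 → K), (Fin.cons a g : Fin 6 → K) 5 = g 4 := fun _ _ => rfl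
  ext g
  simp only [Set.mem_setOf_eq, Set.mem_inter_iff, Set.mem_union, Set.mem_compl_iff,
    Set.mem_Icc, c10, c11, c20, c21, c22, c30, c31, c32, c33, c40, c41, c42, c43, c44,
    c50, c51, c52, c53, c54, c55]
  constructor
  · rintro ⟨h0, h1, δ, hδ, hall⟩
    refine ⟨⟨h0, h1⟩, δ, hδ, fun b c d e => ?_⟩
    have h := hall b c d e
    tauto
  · rintro ⟨⟨h0, h1⟩, δ, hδ, hall⟩
    refine ⟨h0, h1, δ, hδ, fun b c d e => ?_⟩
    have h := hall b c d e
    tauto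

end Helpers

/-- definable continuous functions on `[0,1]` are uniformly continuous. -/
theorem statement15
    (hexp : IsOrderedFieldExpansion L K)
    (hdc : DefinablyComplete L K)
    (f : K → K)
    (hf : Set.Definable (Set.univ : Set K) L
      {x : Fin 2 → K | x 0 ∈ Set.Icc (0 : K) 1 ∧ x 1 = f (x 0)})
    (hcont : ContinuousOn f (Set.Icc (0 : K) 1)) :
    ∀ ε : K, 0 < ε → ∃ δ : K, 0 < δ ∧ ∀ x ∈ Set.Icc (0 : K) 1, ∀ y ∈ Set.Icc (0 : K) 1,
      |x - y| < δ → |f x - f y| < ε := by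
  obtain ⟨hlt, hadd, -⟩ := hexp
  intro ε hε
  set S : Set K := {t : K | 0 ≤ t ∧ t ≤ 1 ∧ ∃ δ : K, 0 < δ ∧ ∀ x y u v : K,
        (0 ≤ x ∧ x ≤ t ∧ 0 ≤ y ∧ y ≤ t ∧ (x ∈ Set.Icc (0:K) 1 ∧ u = f x) ∧
          (y ∈ Set.Icc (0:K) 1 ∧ v = f y) ∧ x < y + δ ∧ y < x + δ) →
          (u < v + ε ∧ v < u + ε)} with hSdef
  have hSd : Set.Definable₁ (Set.univ : Set K) L S := key_def hlt hadd hf ε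
  -- convenient intro/elim forms for membership in S
  have hS_elim : ∀ t ∈ S, 0 ≤ t ∧ t ≤ 1 ∧ ∃ δ : K, 0 < δ ∧ ∀ x y : K,
      0 ≤ x → x ≤ t → 0 ≤ y → y ≤ t → |x - y| < δ → |f x - f y| < ε := by
    rintro t ⟨h0, h1, δ, hδ, hall⟩
    refine ⟨h0, h1, δ, hδ, fun x y hx hxt hy hyt hxy => ?_⟩
    obtain ⟨hxy1, hxy2⟩ := abs_sub_lt_iff.mp hxy
    have h := hall x y (f x) (f y) ⟨hx, hxt, hy, hyt,
      ⟨Set.mem_Icc.mpr ⟨hx, hxt.trans h1⟩, rfl⟩,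
      ⟨Set.mem_Icc.mpr ⟨hy, hyt.trans h1⟩, rfl⟩, by linarith, by linarith⟩
    exact abs_sub_lt_iff.mpr ⟨by linarith [h.1], by linarith [h.2]⟩
  have hS_intro : ∀ t : K, 0 ≤ t → t ≤ 1 → ∀ δ : K, 0 < δ →
      (∀ x y : K, 0 ≤ x → x ≤ t → 0 ≤ y → y ≤ t → |x - y| < δ → |f x - f y| < ε) →
      t ∈ S := by
    intro t h0 h1 δ hδ hgood
    refine ⟨h0, h1, δ, hδ, ?_⟩
    rintro x y u v ⟨hx, hxt, hy, hyt, ⟨-, hu⟩, ⟨-, hv⟩, hxy1, hxy2⟩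
    subst hu; subst hv
    have h := hgood x y hx hxt hy hyt (abs_sub_lt_iff.mpr ⟨by linarith, by linarith⟩)
    obtain ⟨h1', h2'⟩ := abs_sub_lt_iff.mp h
    exact ⟨by linarith, by linarith⟩
  have h0S : (0 : K) ∈ S := by
    refine hS_intro 0 le_rfl zero_le_one 1 one_pos fun x y hx hxt hy hyt _ => ?_
    have hx0 : x = 0 := le_antisymm hxt hx
    have hy0 : y = 0 := le_antisymm hyt hy
    simp [hx0, hy0, hε]
  have hbdd : BddAbove S := ⟨1, fun t ht => (hS_elim t ht).2.1⟩
  obtain ⟨a, ha⟩ := hdc S hSd ⟨0, h0S⟩ hbdd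
  have ha0 : 0 ≤ a := ha.1 h0S
  have ha1 : a ≤ 1 := ha.2 fun t ht => (hS_elim t ht).2.1
  -- continuity at a
  have hca : ContinuousWithinAt f (Set.Icc (0:K) 1) a := hcont a ⟨ha0, ha1⟩
  have hmem : {z : K | |z - f a| < ε / 2} ∈ nhds (f a) :=
    (nhds_basis_abs_sub_lt (f a)).mem_of_mem (half_pos hε)
  have hpre : f ⁻¹' {z : K | |z - f a| < ε / 2} ∈ nhdsWithin a (Set.Icc (0:K) 1) := hca hmem
  rw [mem_nhdsWithin] at hpre
  obtain ⟨U, hUo, haU, hUsub⟩ := hpre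
  obtain ⟨η, hη, hball⟩ := (nhds_basis_abs_sub_lt a).mem_iff.mp (hUo.mem_nhds haU)
  have hcontpt : ∀ y ∈ Set.Icc (0:K) 1, |y - a| < η → |f y - f a| < ε / 2 :=
    fun y hy hya => hUsub ⟨hball hya, hy⟩
  -- pick s ∈ S close to a
  obtain ⟨s, hsS, hs⟩ : ∃ s ∈ S, a - η / 2 < s := by
    by_contra hcon
    push_neg at hcon
    have : a ≤ a - η / 2 := ha.2 fun t ht => hcon t ht
    linarith
  obtain ⟨hs0, hs1, δ₀, hδ₀, hgood⟩ := hS_elim s hsS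
  have hsa : s ≤ a := ha.1 hsS
  set t' : K := min (a + η / 2) 1 with ht'def
  set δ' : K := min δ₀ (η / 2) with hδ'def
  have ht'0 : 0 ≤ t' := le_min (by linarith) zero_le_one
  have ht'1 : t' ≤ 1 := min_le_right _ _
  have hδ'0 : 0 < δ' := lt_min hδ₀ (by linarith)
  -- key step for points beyond s
  have main2 : ∀ x y : K, 0 ≤ x → x ≤ t' → 0 ≤ y → y ≤ t' → |x - y| < δ' → s < x →
      |f x - f y| < ε := by
    intro x y hx hxt hy hyt hxy hsx
    have hxa2 : x ≤ a + η / 2 := hxt.trans (min_le_left _ _)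
    have hya2 : y ≤ a + η / 2 := hyt.trans (min_le_left _ _)
    have hxa : |x - a| < η := abs_sub_lt_iff.mpr ⟨by linarith, by linarith⟩
    have hxa' : |x - a| ≤ η / 2 := abs_sub_le_iff.mpr ⟨by linarith, by linarith⟩
    have hyx : |y - x| < η / 2 := by
      rw [abs_sub_comm]; exact hxy.trans_le (min_le_right _ _)
    have hya : |y - a| < η := by
      calc |y - a| ≤ |y - x| + |x - a| := abs_sub_le _ _ _
        _ < η := by linarith
    have hfx := hcontpt x ⟨hx, hxt.trans ht'1⟩ hxa
    have hfy := hcontpt y ⟨hy, hyt.trans ht'1⟩ hya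
    calc |f x - f y| ≤ |f x - f a| + |f a - f y| := abs_sub_le _ _ _
      _ < ε := by rw [abs_sub_comm (f a)]; linarith
  have ht'S : t' ∈ S := by
    refine hS_intro t' ht'0 ht'1 δ' hδ'0 fun x y hx hxt hy hyt hxy => ?_
    by_cases hxs : x ≤ s
    · by_cases hys : y ≤ s
      · exact hgood x y hx hxs hy hys (hxy.trans_le (min_le_left _ _))
      · rw [abs_sub_comm]
        exact main2 y x hy hyt hx hxt (by rwa [abs_sub_comm]) (lt_of_not_ge hys)
    · exact main2 x y hx hxt hy hyt hxy (lt_of_not_ge hxs)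
  have ht'a : t' ≤ a := ha.1 ht'S
  have ha1' : (1 : K) ≤ a := by
    by_contra hlt1
    push_neg at hlt1
    have : a < t' := lt_min (by linarith) hlt1
    linarith
  have ht'eq : t' = 1 := by
    rw [ht'def]
    exact min_eq_right (by linarith)
  rw [ht'eq] at ht'S
  obtain ⟨-, -, δ, hδ, hfin⟩ := hS_elim 1 ht'S
  exact ⟨δ, hδ, fun x hx y hy hxy => hfin x y hx.1 hx.2 hy.1 hy.2 hxy⟩


end Tame
end

section
/- Definable Banach fixed point theorem: Let K be a definably complete expansion of an ordered field, let X ⊆ K^n be a nonempty closed definable set, and let f : X → X be a definable map, where K^n carries the distance d(x,y) = max_i |x_i − y_i|. Assume that either (a) X is d-compact (closed and bounded) and d(f(x), f(y)) < d(x, y) for all x ≠ y in X, or (b) there exists C ∈ K with 0 ≤ C < 1 such that d(f(x), f(y)) ≤ C·d(x, y) for all x, y ∈ X. Then f has a unique fixed point. -/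
open FirstOrder Set

namespace Tame

variable (L : FirstOrder.Language) (K : Type*) [Field K] [LinearOrder K] [IsStrictOrderedRing K]
  [TopologicalSpace K] [OrderTopology K] [L.Structure K]

/- ====== auxiliary development ====== -/
section Aux
open Fin

variable {L : FirstOrder.Language} {K : Type*} [Field K] [LinearOrder K] [IsStrictOrderedRing K] [L.Structure K]

local notation "UD" => Set.Definable (Set.univ : Set K) L

lemma defPB {k m : ℕ} {S : Set (Fin k → K)} (h : UD S) (ρ : Fin k → Fin m) :
    UD {x : Fin m → K | x ∘ ρ ∈ S} := h.preimage_comp ρ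

lemma defEX {m j : ℕ} {S : Set (Fin (m + j) → K)} (h : UD S) :
    UD {x : Fin m → K | ∃ y : Fin j → K, Fin.append x y ∈ S} := by
  have him := h.image_comp (Fin.castAdd j : Fin m → Fin (m + j))
  convert him using 1
  ext x
  simp only [Set.mem_image, Set.mem_setOf_eq]
  constructor
  · rintro ⟨y, hy⟩
    exact ⟨Fin.append x y, hy, funext fun i => Fin.append_left x y i⟩
  · rintro ⟨g, hg, rfl⟩
    refine ⟨g ∘ Fin.natAdd m, ?_⟩
    have hg' : Fin.append ((fun gg : Fin (m+j) → K => gg ∘ Fin.castAdd j) g)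
        (g ∘ Fin.natAdd m) = g := by
      funext i
      refine Fin.addCases (fun p => ?_) (fun p => ?_) i
      · simp [Fin.append_left]
      · simp [Fin.append_right]
    rw [hg']
    exact hg

lemma defALL {m j : ℕ} {S : Set (Fin (m + j) → K)} (h : UD S) :
    UD {x : Fin m → K | ∀ y : Fin j → K, Fin.append x y ∈ S} := by
  have := (defEX h.compl).compl
  convert this using 1
  ext x
  simp

lemma defCongr {m : ℕ} {S T : Set (Fin m → K)} (h : UD S)
    (e : ∀ x, x ∈ T ↔ x ∈ S) : UD T := by
  convert h using 1
  exact Set.ext e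

lemma defIUnion {m : ℕ} {ι : Type*} [Fintype ι] {S : ι → Set (Fin m → K)}
    (h : ∀ i, UD (S i)) : UD (⋃ i, S i) := by
  refine defCongr (Set.definable_biUnion_finset h Finset.univ) fun x => ?_
  simp

lemma defIInter {m : ℕ} {ι : Type*} [Fintype ι] {S : ι → Set (Fin m → K)}
    (h : ∀ i, UD (S i)) : UD (⋂ i, S i) := by
  refine defCongr (Set.definable_biInter_finset h Finset.univ) fun x => ?_
  simp

lemma defEQc {m : ℕ} (i : Fin m) (c : K) : UD {x : Fin m → K | x i = c} := by
  refine ⟨FirstOrder.Language.Term.equal (FirstOrder.Language.Term.var i)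
    ((L.con (⟨c, Set.mem_univ c⟩ : (Set.univ : Set K))).term), ?_⟩
  ext x
  simp [FirstOrder.Language.Formula.realize_equal]

variable (hlt : Set.Definable (Set.univ : Set K) L {x : Fin 2 → K | x 0 < x 1})
variable (hadd : Set.Definable (Set.univ : Set K) L {x : Fin 3 → K | x 0 + x 1 = x 2})

include hlt in
lemma defLT {m : ℕ} (i j : Fin m) : UD {x : Fin m → K | x i < x j} := by
  refine defCongr (defPB hlt ![i, j]) fun x => ?_
  simp [Set.mem_setOf_eq]

include hlt in
lemma defLE {m : ℕ} (i j : Fin m) : UD {x : Fin m → K | x i ≤ x j} := by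
  refine defCongr (defLT hlt j i).compl fun x => ?_
  simp [not_lt]

include hadd in
lemma defADD {m : ℕ} (i j k : Fin m) : UD {x : Fin m → K | x i + x j = x k} := by
  refine defCongr (defPB hadd ![i, j, k]) fun x => ?_
  simp [Set.mem_setOf_eq]

include hlt in
lemma defLEc {m : ℕ} (i : Fin m) (c : K) : UD {x : Fin m → K | x i ≤ c} := by
  refine defCongr (defEX (j := 1) ((defEQc (natAdd m 0) c).inter
    (defLE hlt (castAdd 1 i) (natAdd m 0)))) fun x => ?_
  simp only [Set.mem_setOf_eq, Set.mem_inter_iff, Fin.append_left, Fin.append_right]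
  constructor
  · intro h; exact ⟨fun _ => c, rfl, h⟩
  · rintro ⟨y, h1, h2⟩; exact h1 ▸ h2

include hlt in
lemma defGEc {m : ℕ} (i : Fin m) (c : K) : UD {x : Fin m → K | c ≤ x i} := by
  refine defCongr (defEX (j := 1) ((defEQc (natAdd m 0) c).inter
    (defLE hlt (natAdd m 0) (castAdd 1 i)))) fun x => ?_
  simp only [Set.mem_setOf_eq, Set.mem_inter_iff, Fin.append_left, Fin.append_right]
  constructor
  · intro h; exact ⟨fun _ => c, rfl, h⟩
  · rintro ⟨y, h1, h2⟩; exact h1 ▸ h2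

include hlt hadd in
lemma defADDLE {m : ℕ} (i j k : Fin m) : UD {x : Fin m → K | x i + x j ≤ x k} := by
  refine defCongr (defEX (j := 1) ((defADD hadd (castAdd 1 i) (castAdd 1 j) (natAdd m 0)).inter
    (defLE hlt (natAdd m 0) (castAdd 1 k)))) fun x => ?_
  simp only [Set.mem_setOf_eq, Set.mem_inter_iff, Fin.append_left, Fin.append_right]
  constructor
  · intro h; exact ⟨fun _ => x i + x j, rfl, h⟩
  · rintro ⟨y, h1, h2⟩; exact h1 ▸ h2

include hlt hadd in
lemma defLEADD {m : ℕ} (i j k : Fin m) : UD {x : Fin m → K | x i ≤ x j + x k} := by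
  refine defCongr (defEX (j := 1) ((defADD hadd (castAdd 1 j) (castAdd 1 k) (natAdd m 0)).inter
    (defLE hlt (castAdd 1 i) (natAdd m 0)))) fun x => ?_
  simp only [Set.mem_setOf_eq, Set.mem_inter_iff, Fin.append_left, Fin.append_right]
  constructor
  · intro h; exact ⟨fun _ => x j + x k, rfl, h⟩
  · rintro ⟨y, h1, h2⟩; exact h1 ▸ h2

include hadd in
lemma defEQcADD {m : ℕ} (i : Fin m) (c : K) (j : Fin m) :
    UD {x : Fin m → K | x i = c + x j} := by
  refine defCongr (defEX (j := 1) ((defEQc (natAdd m 0) c).inter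
    (defADD hadd (natAdd m 0) (castAdd 1 j) (castAdd 1 i)))) fun x => ?_
  simp only [Set.mem_setOf_eq, Set.mem_inter_iff, Fin.append_left, Fin.append_right]
  constructor
  · intro h; exact ⟨fun _ => c, rfl, h.symm⟩
  · rintro ⟨y, h1, h2⟩; rw [← h2, h1]

include hlt hadd in
lemma defLEcADD {m : ℕ} (i : Fin m) (c : K) (j : Fin m) :
    UD {x : Fin m → K | x i ≤ c + x j} := by
  refine defCongr (defEX (j := 1) ((defEQcADD hadd (natAdd m 0) c (castAdd 1 j)).inter
    (defLE hlt (castAdd 1 i) (natAdd m 0)))) fun x => ?_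
  simp only [Set.mem_setOf_eq, Set.mem_inter_iff, Fin.append_left, Fin.append_right]
  constructor
  · intro h; exact ⟨fun _ => c + x j, rfl, h⟩
  · rintro ⟨y, h1, h2⟩; exact h1 ▸ h2

include hlt hadd in
lemma defGEcADD {m : ℕ} (c : K) (i j : Fin m) :
    UD {x : Fin m → K | c ≤ x i + x j} := by
  refine defCongr (defEX (j := 1) ((defADD hadd (castAdd 1 i) (castAdd 1 j) (natAdd m 0)).inter
    (defGEc hlt (natAdd m 0) c))) fun x => ?_
  simp only [Set.mem_setOf_eq, Set.mem_inter_iff, Fin.append_left, Fin.append_right]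
  constructor
  · intro h; exact ⟨fun _ => x i + x j, rfl, h⟩
  · rintro ⟨y, h1, h2⟩; exact h1 ▸ h2

include hlt hadd in
lemma defLEADDc {m : ℕ} (i j : Fin m) (c : K) (k : Fin m) :
    UD {x : Fin m → K | x i ≤ x j + (c + x k)} := by
  refine defCongr (defEX (j := 1) ((defEQcADD hadd (natAdd m 0) c (castAdd 1 k)).inter
    (defLEADD hlt hadd (castAdd 1 i) (castAdd 1 j) (natAdd m 0)))) fun x => ?_
  simp only [Set.mem_setOf_eq, Set.mem_inter_iff, Fin.append_left, Fin.append_right]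
  constructor
  · intro h; exact ⟨fun _ => c + x k, rfl, h⟩
  · rintro ⟨y, h1, h2⟩; exact h1 ▸ h2

end Aux

section DmaxLemmas
variable {K : Type*} [Field K] [LinearOrder K] [IsStrictOrderedRing K]

lemma dmax_le {n : ℕ} {x y : Fin n → K} {s : K} :
    dmax K x y ≤ s ↔ 0 ≤ s ∧ ∀ i, |x i - y i| ≤ s := by
  rw [dmax, Finset.fold_max_le]
  simp

lemma le_dmax {n : ℕ} {x y : Fin n → K} {t : K} :
    t ≤ dmax K x y ↔ t ≤ 0 ∨ ∃ i, t ≤ |x i - y i| := by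
  rw [dmax, Finset.le_fold_max]
  simp

lemma dmax_nonneg {n : ℕ} {x y : Fin n → K} : 0 ≤ dmax K x y :=
  le_dmax.mpr (Or.inl le_rfl)

lemma abs_le_dmax {n : ℕ} {x y : Fin n → K} (i : Fin n) : |x i - y i| ≤ dmax K x y :=
  (dmax_le.mp le_rfl).2 i

lemma dmax_eq_zero_iff {n : ℕ} {x y : Fin n → K} : dmax K x y = 0 ↔ x = y := by
  constructor
  · intro h
    funext i
    have := abs_le_dmax (x := x) (y := y) i
    rw [h, abs_nonpos_iff, sub_eq_zero] at this
    exact this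
  · rintro rfl
    exact le_antisymm (dmax_le.mpr ⟨le_rfl, fun i => by simp⟩) dmax_nonneg

lemma dmax_comm {n : ℕ} {x y : Fin n → K} : dmax K x y = dmax K y x := by
  refine le_antisymm (dmax_le.mpr ⟨dmax_nonneg, fun i => ?_⟩)
    (dmax_le.mpr ⟨dmax_nonneg, fun i => ?_⟩) <;>
  · rw [abs_sub_comm]; exact abs_le_dmax i

lemma dmax_triangle {n : ℕ} {x y z : Fin n → K} : dmax K x z ≤ dmax K x y + dmax K y z :=
  dmax_le.mpr ⟨add_nonneg dmax_nonneg dmax_nonneg, fun i =>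
    (abs_sub_le _ _ _).trans (add_le_add (abs_le_dmax i) (abs_le_dmax i))⟩

end DmaxLemmas

section Key
open Fin

variable {L : FirstOrder.Language} {K : Type*} [Field K] [LinearOrder K] [IsStrictOrderedRing K]
  [TopologicalSpace K] [OrderTopology K] [L.Structure K]

theorem keyFix
    (hlt : Set.Definable (Set.univ : Set K) L {x : Fin 2 → K | x 0 < x 1})
    (hadd : Set.Definable (Set.univ : Set K) L {x : Fin 3 → K | x 0 + x 1 = x 2})
    (hdc : DefinablyComplete L K)
    {n : ℕ} {X : Set (Fin n → K)}
    (hX : Set.Definable (Set.univ : Set K) L X)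
    (hne : X.Nonempty) (hcl : IsClosed X)
    {r : K} (hr : ∀ x ∈ X, ∀ i, |x i| ≤ r)
    {f : (Fin n → K) → (Fin n → K)}
    (hG : Set.Definable (Set.univ : Set K) L
      {z : Fin (n + n) → K | ∃ x ∈ X, z = Fin.append x (f x)})
    (hmaps : Set.MapsTo f X X)
    (hstrict : ∀ x ∈ X, ∀ y ∈ X, x ≠ y → dmax K (f x) (f y) < dmax K x y) :
    ∃ z ∈ X, f z = z := by
  obtain ⟨x0, hx0⟩ := hne
  set Gr : Set (Fin (n + n) → K) := {z | ∃ x ∈ X, z = Fin.append x (f x)} with hGr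
  -- basic facts about the graph
  have memGr : ∀ {x : Fin n → K} {y : Fin n → K},
      Fin.append x y ∈ Gr ↔ x ∈ X ∧ y = f x := by
    intro x y
    constructor
    · rintro ⟨x', hx', he⟩
      have hx'' : x = x' := by
        funext i
        have := congrFun he (Fin.castAdd n i)
        simpa [Fin.append_left] using this
      subst hx''
      refine ⟨hx', ?_⟩
      funext i
      have := congrFun he (Fin.natAdd n i)
      rw [Fin.append_right, Fin.append_right] at this
      exact this
    · rintro ⟨hx, rfl⟩
      exact ⟨x, hx, rfl⟩
  have hcontr : ∀ x ∈ X, ∀ y ∈ X, dmax K (f x) (f y) ≤ dmax K x y := by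
    intro x hx y hy
    by_cases hxy : x = y
    · subst hxy
      rw [dmax_eq_zero_iff.mpr rfl, dmax_eq_zero_iff.mpr rfl]
    · exact (hstrict x hx y hy hxy).le
  -- the set of lower bounds of φ on X
  set T : Set K := {t : K | ∀ x ∈ X, t ≤ dmax K x (f x)} with hT
  have defT : Set.Definable₁ (Set.univ : Set K) L T := by
    show Set.Definable (Set.univ : Set K) L {w : Fin 1 → K | w 0 ∈ T}
    classical
    set i0 : Fin (1 + (n + n)) := Fin.castAdd (n + n) 0 with hi0
    set xi : Fin n → Fin (1 + (n + n)) := fun i => Fin.natAdd 1 (Fin.castAdd n i) with hxi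
    set yi : Fin n → Fin (1 + (n + n)) := fun i => Fin.natAdd 1 (Fin.natAdd n i) with hyi
    have hS : Set.Definable (Set.univ : Set K)  L
        (({u : Fin (1 + (n + n)) → K | u ∘ Fin.natAdd 1 ∈ Gr}ᶜ) ∪
          ({u : Fin (1 + (n + n)) → K | u i0 ≤ (0 : K)} ∪
            ⋃ i : Fin n, ({u : Fin (1 + (n + n)) → K | u i0 + u (yi i) ≤ u (xi i)} ∪
              {u : Fin (1 + (n + n)) → K | u i0 + u (xi i) ≤ u (yi i)}))) :=
      ((defPB hG _).compl).union ((defLEc hlt i0 0).union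
        (defIUnion fun i => (defADDLE hlt hadd i0 (yi i) (xi i)).union
          (defADDLE hlt hadd i0 (xi i) (yi i))))
    refine defCongr (defALL hS) fun w => ?_
    simp only [Set.mem_setOf_eq, Set.mem_union, Set.mem_compl_iff, Set.mem_iUnion]
    constructor
    · intro h v
      have hcomp : Fin.append w v ∘ Fin.natAdd 1 = v := funext fun i => Fin.append_right w v i
      by_cases hv : v ∈ Gr
      · right
        obtain ⟨x, hx, rfl⟩ := hv
        have hle := le_dmax.mp (h x hx)
        rcases hle with h0 | ⟨i, hi⟩
        · left
          simpa [hi0, Fin.append_left] using h0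
        · right
          refine ⟨i, ?_⟩
          rcases le_abs.mp hi with h1 | h1
          · left
            simp only [hxi, hyi, hi0, Set.mem_setOf_eq, Fin.append_left, Fin.append_right]
            linarith
          · right
            simp only [hxi, hyi, hi0, Set.mem_setOf_eq, Fin.append_left, Fin.append_right]
            linarith
      · left
        rw [hcomp]
        exact hv
    · intro h x hx
      have hv := h (Fin.append x (f x))
      have hcomp : Fin.append w (Fin.append x (f x)) ∘ Fin.natAdd 1 = Fin.append x (f x) :=
        funext fun i => Fin.append_right w _ i
      rw [hcomp] at hv
      rcases hv with hv | hv
      · exact absurd ⟨x, hx, rfl⟩ hv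
      · rcases hv with hv | ⟨i, hv⟩
        · refine le_dmax.mpr (Or.inl ?_)
          simpa [hi0, Fin.append_left] using hv
        · refine le_dmax.mpr (Or.inr ⟨i, ?_⟩)
          rcases hv with hv | hv <;>
            simp only [hxi, hyi, hi0, Set.mem_setOf_eq, Fin.append_left,
              Fin.append_right] at hv
          · exact le_abs.mpr (Or.inl (by linarith))
          · exact le_abs.mpr (Or.inr (by linarith))
  have hTne : T.Nonempty := ⟨0, fun x _ => dmax_nonneg⟩
  have hTbdd : BddAbove T := ⟨dmax K x0 (f x0), fun t ht => ht x0 hx0⟩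
  obtain ⟨m, hm⟩ := hdc T defT hTne hTbdd
  have hmlb : ∀ x ∈ X, m ≤ dmax K x (f x) := fun x hx => hm.2 fun t ht => ht x hx
  have hS0 : ∀ t : K, 0 < t → ∃ x ∈ X, dmax K x (f x) ≤ m + t := by
    intro t ht
    by_contra hc
    push_neg at hc
    have hmem : m + t ∈ T := fun x hx => (hc x hx).le
    have := hm.1 hmem
    linarith
  -- main construction: pin down the coordinates of a minimizer one at a time
  have main : ∀ k : ℕ, ∃ z : Fin n → K, ∀ t : K, 0 < t →
      ∃ x ∈ X, dmax K x (f x) ≤ m + t ∧ ∀ j : Fin n, (j : ℕ) < k → |x j - z j| ≤ t := by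
    intro k
    induction k with
    | zero =>
      refine ⟨fun _ => 0, fun t ht => ?_⟩
      obtain ⟨x, hx, hφ⟩ := hS0 t ht
      exact ⟨x, hx, hφ, fun j hj => absurd hj (Nat.not_lt_zero _)⟩
    | succ k ih =>
      obtain ⟨z, hz⟩ := ih
      by_cases hkn : k < n
      · set k' : Fin n := ⟨k, hkn⟩ with hk'
        set U : Set K := {u : K | ∀ t : K, 0 < t → ∃ x, x ∈ X ∧ dmax K x (f x) ≤ m + t ∧
          (∀ j : Fin n, (j : ℕ) < k → |x j - z j| ≤ t) ∧ u ≤ x k'} with hU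
        have defU : Set.Definable₁ (Set.univ : Set K) L U := by
          show Set.Definable (Set.univ : Set K) L {w : Fin 1 → K | w 0 ∈ U}
          classical
          set M4 : ℕ := (1 + 1) + n with hM4
          set iu : Fin M4 := Fin.castAdd n (Fin.castAdd 1 0) with hiu
          set it4 : Fin M4 := Fin.castAdd n (Fin.natAdd 1 0) with hit4
          set jx : Fin n → Fin M4 := fun j => Fin.natAdd (1 + 1) j with hjx
          set xi5 : Fin n → Fin (M4 + n) := fun j => Fin.castAdd n (jx j) with hxi5
          set yi5 : Fin n → Fin (M4 + n) := fun j => Fin.natAdd M4 j with hyi5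
          set it5 : Fin (M4 + n) := Fin.castAdd n it4 with hit5
          set ρ : Fin (n + n) → Fin (M4 + n) :=
            fun i => Fin.addCases (motive := fun _ => Fin (M4 + n)) xi5 yi5 i with hρ
          set S5 : Set (Fin (M4 + n) → K) :=
            {w | w ∘ ρ ∈ Gr} ∩ ({w | -m ≤ w it5} ∩
              ⋂ i : Fin n, ({w | w (xi5 i) ≤ w (yi5 i) + (m + w it5)} ∩
                {w | w (yi5 i) ≤ w (xi5 i) + (m + w it5)})) with hS5
          have defS5 : Set.Definable (Set.univ : Set K) L S5 :=
            (defPB hG ρ).inter ((defGEc hlt it5 (-m)).inter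
              (defIInter fun i => (defLEADDc hlt hadd (xi5 i) (yi5 i) m it5).inter
                (defLEADDc hlt hadd (yi5 i) (xi5 i) m it5)))
          set C3 : Set (Fin M4 → K) := ⋂ j : Fin n,
            (if (j : ℕ) < k then
              ({w : Fin M4 → K | w (jx j) ≤ z j + w it4} ∩
                {w : Fin M4 → K | z j ≤ w (jx j) + w it4})
            else Set.univ) with hC3
          have defC3 : Set.Definable (Set.univ : Set K) L C3 := by
            refine defIInter fun j => ?_
            split_ifs
            · exact (defLEcADD hlt hadd (jx j) (z j) it4).inter
                (defGEcADD hlt hadd (z j) (jx j) it4)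
            · exact Set.definable_univ
          set S4 : Set (Fin M4 → K) :=
            {w | w ∘ Fin.natAdd (1 + 1) ∈ X} ∩
              (({w : Fin M4 → K | ∃ y : Fin n → K, Fin.append w y ∈ S5}) ∩
                (C3 ∩ {w : Fin M4 → K | w iu ≤ w (jx k')})) with hS4
          have defS4 : Set.Definable (Set.univ : Set K) L S4 :=
            (defPB hX _).inter ((defEX defS5).inter (defC3.inter (defLE hlt iu (jx k'))))
          set S2 : Set (Fin (1 + 1) → K) :=
            {v | v (Fin.natAdd 1 0) ≤ 0} ∪
              {v : Fin (1 + 1) → K | ∃ x : Fin n → K, Fin.append v x ∈ S4} with hS2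
          have defS2 : Set.Definable (Set.univ : Set K) L S2 :=
            (defLEc hlt (Fin.natAdd 1 0) 0).union (defEX defS4)
          refine defCongr (defALL defS2) fun w => ?_
          simp only [Set.mem_setOf_eq]
          constructor
          · intro hu s
            by_cases hs : 0 < s 0
            · right
              obtain ⟨x, hxX, hφ, hjs, hux⟩ := hu (s 0) hs
              refine ⟨x, ?_, ⟨f x, ?_⟩, ?_, ?_⟩
              · show Fin.append (Fin.append w s) x ∘ Fin.natAdd (1 + 1) ∈ X
                have : Fin.append (Fin.append w s) x ∘ Fin.natAdd (1 + 1) = x :=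
                  funext fun i => Fin.append_right _ _ i
                rw [this]; exact hxX
              · -- membership in S5
                have hcomp : Fin.append (Fin.append (Fin.append w s) x) (f x) ∘ ρ =
                    Fin.append x (f x) := by
                  funext i
                  refine Fin.addCases (fun p => ?_) (fun p => ?_) i <;>
                    simp only [hρ, Function.comp_apply, Fin.addCases_left, Fin.addCases_right,
                      hxi5, hyi5, hjx, Fin.append_left, Fin.append_right] <;>
                    exact Fin.append_right _ _ _
                refine ⟨?_, ?_, ?_⟩
                · show _ ∘ ρ ∈ Gr
                  rw [hcomp]
                  exact ⟨x, hxX, rfl⟩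
                · show -m ≤ Fin.append (Fin.append (Fin.append w s) x) (f x) it5
                  have h0 : (0 : K) ≤ m + s 0 := le_trans dmax_nonneg hφ
                  simp only [hit5, hit4, Fin.append_left, Fin.append_right]
                  linarith
                · simp only [Set.mem_iInter, Set.mem_inter_iff, Set.mem_setOf_eq, hxi5, hyi5,
                    hjx, hit5, hit4, Fin.append_left, Fin.append_right]
                  intro i
                  have habs := (dmax_le.mp hφ).2 i
                  rw [abs_sub_le_iff] at habs
                  constructor <;> linarith [habs.1, habs.2]
              · -- C3
                simp only [hC3, Set.mem_iInter]
                intro j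
                by_cases hjk : (j : ℕ) < k
                · rw [if_pos hjk]
                  have habs := hjs j hjk
                  rw [abs_sub_le_iff] at habs
                  constructor <;>
                    · simp only [Set.mem_setOf_eq, hjx, hit4, Fin.append_left, Fin.append_right]
                      linarith [habs.1, habs.2]
                · rw [if_neg hjk]; trivial
              · show Fin.append (Fin.append w s) x iu ≤ Fin.append (Fin.append w s) x (jx k')
                simp only [hiu, hjx, Fin.append_left, Fin.append_right]
                exact hux
            · left
              show Fin.append w s (Fin.natAdd 1 0) ≤ 0
              rw [Fin.append_right]
              exact not_lt.mp hs
          · intro h t ht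
            have hv := h (fun _ => t)
            rcases hv with hv | ⟨x, hx1, ⟨y, hy1, hy2, hy3⟩, hx3, hx4⟩
            · exfalso
              rw [Set.mem_setOf_eq, Fin.append_right] at hv
              exact absurd ht (not_lt.mpr hv)
            · have hxmem : x ∈ X := by
                have : Fin.append (Fin.append w fun _ => t) x ∘ Fin.natAdd (1 + 1) = x :=
                  funext fun i => Fin.append_right _ _ i
                rwa [Set.mem_setOf_eq, this] at hx1
              have hcomp : Fin.append (Fin.append (Fin.append w fun _ => t) x) y ∘ ρ =
                  Fin.append x y := by
                funext i
                refine Fin.addCases (fun p => ?_) (fun p => ?_) i <;>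
                  simp only [hρ, Function.comp_apply, Fin.addCases_left, Fin.addCases_right,
                    hxi5, hyi5, hjx, Fin.append_left, Fin.append_right] <;>
                  exact Fin.append_right _ _ _
              rw [Set.mem_setOf_eq, hcomp] at hy1
              obtain ⟨-, rfl⟩ := memGr.mp hy1
              rw [Set.mem_setOf_eq] at hy2
              simp only [hit5, hit4, Fin.append_left, Fin.append_right] at hy2
              refine ⟨x, hxmem, ?_, ?_, ?_⟩
              · refine dmax_le.mpr ⟨by linarith, fun i => ?_⟩
                have := Set.mem_iInter.mp hy3 i
                simp only [Set.mem_inter_iff, Set.mem_setOf_eq, hxi5, hyi5, hjx, hit5, hit4,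
                  Fin.append_left, Fin.append_right] at this
                rw [abs_sub_le_iff]
                constructor <;> linarith [this.1, this.2]
              · intro j hjk
                have := Set.mem_iInter.mp hx3 j
                rw [if_pos hjk] at this
                simp only [Set.mem_inter_iff, Set.mem_setOf_eq, hjx, hit4,
                  Fin.append_left, Fin.append_right] at this
                rw [abs_sub_le_iff]
                constructor <;> linarith [this.1, this.2]
              · have := hx4
                simp only [Set.mem_setOf_eq, hiu, hjx, Fin.append_left, Fin.append_right] at this
                exact this
        have hUne : U.Nonempty := by
          refine ⟨-r, fun t ht => ?_⟩
          obtain ⟨x, hxX, hφ, hjs⟩ := hz t ht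
          exact ⟨x, hxX, hφ, hjs, (abs_le.mp (hr x hxX k')).1⟩
        have hUbdd : BddAbove U := by
          refine ⟨r, fun u hu => ?_⟩
          obtain ⟨x, hxX, -, -, hux⟩ := hu 1 one_pos
          exact hux.trans (abs_le.mp (hr x hxX k')).2
        obtain ⟨c, hc⟩ := hdc U defU hUne hUbdd
        refine ⟨Function.update z k' c, ?_⟩
        intro t ht
        have hii : ∃ t0, 0 < t0 ∧ ∀ x, x ∈ X → dmax K x (f x) ≤ m + t0 →
            (∀ j : Fin n, (j : ℕ) < k → |x j - z j| ≤ t0) → x k' ≤ c + t / 2 := by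
          by_contra hcon
          push_neg at hcon
          have hmem : c + t / 2 ∈ U := by
            intro s hs
            obtain ⟨x, h1, h2, h3, h4⟩ := hcon s hs
            exact ⟨x, h1, h2, h3, h4.le⟩
          have := hc.1 hmem
          linarith
        obtain ⟨t0, ht0, hub⟩ := hii
        have hnub : ∃ u ∈ U, c - t / 2 < u := by
          by_contra hcon
          push_neg at hcon
          have := hc.2 hcon
          linarith
        obtain ⟨u, hu, hcu⟩ := hnub
        obtain ⟨x, hxX, hφ, hjs, hux⟩ := hu (min t t0) (lt_min ht ht0)
        refine ⟨x, hxX, hφ.trans (add_le_add_right (min_le_left t t0) m), ?_⟩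
        intro j hj
        by_cases hjk : (j : ℕ) < k
        · have hjne : j ≠ k' := fun he => by rw [he] at hjk; exact absurd hjk (lt_irrefl k)
          rw [Function.update_of_ne hjne]
          exact (hjs j hjk).trans (min_le_left t t0)
        · have hjv : (j : ℕ) = k := by omega
          have hjeq : j = k' := Fin.ext (by simp [hjv, hk'])
          subst hjeq
          rw [Function.update_self]
          have h1 : x k' ≤ c + t / 2 :=
            hub x hxX (hφ.trans (add_le_add_right (min_le_right t t0) m))
              (fun j' hj' => (hjs j' hj').trans (min_le_right t t0))
          have h2 : c - t / 2 < x k' := lt_of_lt_of_le hcu hux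
          rw [abs_sub_le_iff]
          constructor <;> linarith
      · refine ⟨z, fun t ht => ?_⟩
        obtain ⟨x, hxX, hφ, hjs⟩ := hz t ht
        exact ⟨x, hxX, hφ, fun j _ => hjs j (lt_of_lt_of_le j.isLt (not_lt.mp hkn))⟩
  obtain ⟨z, hzfin⟩ := main n
  have happrox : ∀ t : K, 0 < t → ∃ x ∈ X, dmax K x (f x) ≤ m + t ∧ dmax K x z ≤ t := by
    intro t ht
    obtain ⟨x, hx, h1, h2⟩ := hzfin t ht
    exact ⟨x, hx, h1, dmax_le.mpr ⟨ht.le, fun j => h2 j j.isLt⟩⟩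
  have hzX : z ∈ X := by
    by_contra hzX
    obtain ⟨I, uu, huu, hsub⟩ := isOpen_pi_iff.mp hcl.isOpen_compl z hzX
    have hd : ∀ i : Fin n, ∃ d : K, 0 < d ∧
        (i ∈ I → ∀ w : K, |w - z i| ≤ d → w ∈ uu i) := by
      intro i
      by_cases hi : i ∈ I
      · obtain ⟨l, u', hmem, hsubI⟩ :=
          mem_nhds_iff_exists_Ioo_subset.mp ((huu i hi).1.mem_nhds (huu i hi).2)
        obtain ⟨hl, hu'⟩ := hmem
        refine ⟨min (z i - l) (u' - z i) / 2, by
          have : (0:K) < min (z i - l) (u' - z i) := lt_min (by linarith) (by linarith)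
          linarith, fun _ w hw => ?_⟩
        apply hsubI
        have habs := abs_le.mp hw
        have hmin : min (z i - l) (u' - z i) / 2 < min (z i - l) (u' - z i) := by
          have : (0:K) < min (z i - l) (u' - z i) := lt_min (by linarith) (by linarith)
          linarith
        have hm1 : min (z i - l) (u' - z i) ≤ z i - l := min_le_left _ _
        have hm2 : min (z i - l) (u' - z i) ≤ u' - z i := min_le_right _ _
        constructor <;> [skip; skip] <;> first
          | (show l < w; nlinarith [habs.1, habs.2])
          | (show w < u'; nlinarith [habs.1, habs.2])
      · exact ⟨1, one_pos, fun h => absurd h hi⟩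
    choose d hd0 hdsub using hd
    have ht : 0 < Finset.univ.fold min 1 d := by
      rw [Finset.lt_fold_min]
      exact ⟨one_pos, fun i _ => hd0 i⟩
    obtain ⟨x, hxX, -, hdx⟩ := happrox _ ht
    have hxc : x ∈ (I : Set (Fin n)).pi uu := by
      intro i hi
      refine hdsub i hi (x i) ?_
      have h1 : |x i - z i| ≤ Finset.univ.fold min 1 d := (dmax_le.mp hdx).2 i
      have h2 : Finset.univ.fold min 1 d ≤ d i := by
        rw [Finset.fold_min_le]
        exact Or.inr ⟨i, Finset.mem_univ i, le_rfl⟩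
      exact h1.trans h2
    exact hsub hxc hxX
  have hφz : dmax K z (f z) = m := by
    have h1 : m ≤ dmax K z (f z) := hmlb z hzX
    have h2 : ∀ t : K, 0 < t → dmax K z (f z) ≤ m + 3 * t := by
      intro t ht
      obtain ⟨x, hx, hφ, hdxz⟩ := happrox t ht
      have e1 : dmax K z (f z) ≤ dmax K z x + dmax K x (f x) + dmax K (f x) (f z) := by
        calc dmax K z (f z) ≤ dmax K z (f x) + dmax K (f x) (f z) := dmax_triangle
        _ ≤ (dmax K z x + dmax K x (f x)) + dmax K (f x) (f z) :=
            add_le_add_left dmax_triangle _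
      have e2 : dmax K z x ≤ t := by rw [dmax_comm]; exact hdxz
      have e3 : dmax K (f x) (f z) ≤ t := (hcontr x hx z hzX).trans hdxz
      linarith
    by_contra hne'
    have hlt' : m < dmax K z (f z) := lt_of_le_of_ne h1 fun he => hne' he.symm
    have := h2 ((dmax K z (f z) - m) / 4) (by linarith)
    linarith
  refine ⟨z, hzX, ?_⟩
  by_contra hne'
  have h1 : dmax K (f z) (f (f z)) < dmax K z (f z) :=
    hstrict z hzX (f z) (hmaps hzX) fun he => hne' he.symm
  have h2 : m ≤ dmax K (f z) (f (f z)) := hmlb (f z) (hmaps hzX)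
  rw [hφz] at h1
  linarith
end Key

/-- the definable Banach fixed point theorem. -/
theorem statement17
    (hexp : IsOrderedFieldExpansion L K)
    (hdc : DefinablyComplete L K)
    (n : ℕ) (X : Set (Fin n → K))
    (hX : Set.Definable (Set.univ : Set K) L X)
    (hne : X.Nonempty) (hcl : IsClosed X)
    (f : (Fin n → K) → (Fin n → K))
    (hf : DefFunGraphOn L K X f) (hmaps : Set.MapsTo f X X)
    (hyp : (IsBddSet K X ∧
        ∀ x ∈ X, ∀ y ∈ X, x ≠ y → dmax K (f x) (f y) < dmax K x y) ∨
      (∃ C : K, 0 ≤ C ∧ C < 1 ∧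
        ∀ x ∈ X, ∀ y ∈ X, dmax K (f x) (f y) ≤ C * dmax K x y)) :
    ∃! z : Fin n → K, z ∈ X ∧ f z = z := by
  obtain ⟨hltE, haddE, -⟩ := hexp
  have hlt : Set.Definable (Set.univ : Set K) L {x : Fin 2 → K | x 0 < x 1} :=
    hltE.mono (Set.empty_subset _)
  have hadd : Set.Definable (Set.univ : Set K) L {x : Fin 3 → K | x 0 + x 1 = x 2} :=
    haddE.mono (Set.empty_subset _)
  have hfG : Set.Definable (Set.univ : Set K) L
      {z : Fin (n + n) → K | ∃ x ∈ X, z = Fin.append x (f x)} := hf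
  rcases hyp with ⟨⟨r, hr⟩, hstr⟩ | ⟨C, hC0, hC1, hlip⟩
  · obtain ⟨z, hzX, hz⟩ := keyFix hlt hadd hdc hX hne hcl hr hfG hmaps hstr
    refine ⟨z, ⟨hzX, hz⟩, ?_⟩
    rintro y ⟨hyX, hfy⟩
    by_contra hne'
    have h := hstr y hyX z hzX hne'
    rw [hfy, hz] at h
    exact absurd h (lt_irrefl _)
  · obtain ⟨x0, hx0⟩ := hne
    set R : K := dmax K x0 (f x0) / (1 - C) with hR
    have h1C : (0 : K) < 1 - C := by linarith
    have hR0 : 0 ≤ R := div_nonneg dmax_nonneg h1C.le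
    have hRC : (1 - C) * R = dmax K x0 (f x0) := by
      rw [hR, mul_div_cancel₀ _ h1C.ne']
    set X' : Set (Fin n → K) :=
      X ∩ ⋂ i : Fin n, {x : Fin n → K | x i ∈ Set.Icc (x0 i - R) (x0 i + R)} with hX'
    have hmemX' : ∀ x, x ∈ X' ↔ x ∈ X ∧ ∀ i, |x i - x0 i| ≤ R := by
      intro x
      rw [hX']
      simp only [Set.mem_inter_iff, Set.mem_iInter, Set.mem_setOf_eq, Set.mem_Icc]
      refine and_congr_right fun _ => forall_congr' fun i => ?_
      rw [abs_sub_le_iff]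
      constructor <;> intro h <;> constructor <;> linarith [h.1, h.2]
    have hX'def : Set.Definable (Set.univ : Set K) L X' := by
      refine hX.inter (defIInter fun i => ?_)
      refine defCongr ((defLEc hlt i (x0 i + R)).inter (defGEc hlt i (x0 i - R))) fun x => ?_
      simp only [Set.mem_setOf_eq, Set.mem_inter_iff, Set.mem_Icc]
      tauto
    have hcl' : IsClosed X' :=
      hcl.inter (isClosed_iInter fun i =>
        IsClosed.preimage (continuous_apply i) isClosed_Icc)
    have hx0' : x0 ∈ X' := (hmemX' x0).mpr ⟨hx0, fun i => by simpa using hR0⟩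
    have hXsub : X' ⊆ X := Set.inter_subset_left
    have hdX' : ∀ x ∈ X', dmax K x x0 ≤ R := fun x hx =>
      dmax_le.mpr ⟨hR0, ((hmemX' x).mp hx).2⟩
    have hr' : ∀ x ∈ X', ∀ i, |x i| ≤ R + dmax K x0 (fun _ => 0) := by
      intro x hx i
      have h1 : |x i - x0 i| ≤ R := ((hmemX' x).mp hx).2 i
      have h2 : |x0 i - (fun _ => (0 : K)) i| ≤ dmax K x0 (fun _ => 0) :=
        abs_le_dmax (x := x0) (y := fun _ => (0 : K)) i
      simp only [sub_zero] at h2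
      calc |x i| = |(x i - x0 i) + x0 i| := by ring_nf
        _ ≤ |x i - x0 i| + |x0 i| := abs_add_le _ _
        _ ≤ R + dmax K x0 (fun _ => 0) := add_le_add h1 h2
    have hmaps' : Set.MapsTo f X' X' := by
      intro x hx
      have hxX : x ∈ X := hXsub hx
      refine (hmemX' (f x)).mpr ⟨hmaps hxX, fun i => ?_⟩
      have e1 : |f x i - x0 i| ≤ dmax K (f x) x0 := abs_le_dmax i
      have e2 : dmax K (f x) x0 ≤ dmax K (f x) (f x0) + dmax K (f x0) x0 := dmax_triangle
      have e3 : dmax K (f x) (f x0) ≤ C * dmax K x x0 := hlip x hxX x0 hx0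
      have e4 : dmax K x x0 ≤ R := hdX' x hx
      have e5 : C * dmax K x x0 ≤ C * R := mul_le_mul_of_nonneg_left e4 hC0
      have e6 : dmax K (f x0) x0 = dmax K x0 (f x0) := dmax_comm
      have e7 : C * R + dmax K x0 (f x0) = R := by rw [← hRC]; ring
      linarith
    have hstr' : ∀ x ∈ X', ∀ y ∈ X', x ≠ y → dmax K (f x) (f y) < dmax K x y := by
      intro x hx y hy hxy
      have hd0 : 0 < dmax K x y :=
        lt_of_le_of_ne dmax_nonneg fun he => hxy (dmax_eq_zero_iff.mp he.symm)
      calc dmax K (f x) (f y) ≤ C * dmax K x y := hlip x (hXsub hx) y (hXsub hy)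
        _ < 1 * dmax K x y := mul_lt_mul_of_pos_right hC1 hd0
        _ = dmax K x y := one_mul _
    have hG' : Set.Definable (Set.univ : Set K) L
        {zz : Fin (n + n) → K | ∃ x ∈ X', zz = Fin.append x (f x)} := by
      refine defCongr (hfG.inter (defIInter (S := fun i : Fin n =>
        {zz : Fin (n + n) → K | zz (Fin.castAdd n i) ≤ x0 i + R} ∩
          {zz : Fin (n + n) → K | x0 i - R ≤ zz (Fin.castAdd n i)})
        fun i => (defLEc hlt (Fin.castAdd n i) (x0 i + R)).inter
          (defGEc hlt (Fin.castAdd n i) (x0 i - R)))) fun zz => ?_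
      simp only [Set.mem_setOf_eq, Set.mem_inter_iff, Set.mem_iInter]
      constructor
      · rintro ⟨x, hx, rfl⟩
        obtain ⟨hxX, hbox⟩ := (hmemX' x).mp hx
        refine ⟨⟨x, hxX, rfl⟩, fun i => ?_⟩
        have := abs_le.mp (hbox i)
        constructor <;>
          · rw [Fin.append_left]
            linarith [this.1, this.2]
      · rintro ⟨⟨x, hxX, rfl⟩, hbox⟩
        refine ⟨x, (hmemX' x).mpr ⟨hxX, fun i => ?_⟩, rfl⟩
        have hb := hbox i
        simp only [Fin.append_left] at hb
        rw [abs_le]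
        constructor <;> linarith [hb.1, hb.2]
    obtain ⟨z, hzX', hz⟩ := keyFix hlt hadd hdc hX'def ⟨x0, hx0'⟩ hcl' hr' hG' hmaps' hstr'
    refine ⟨z, ⟨hXsub hzX', hz⟩, ?_⟩
    rintro y ⟨hyX, hfy⟩
    have h1 : dmax K y z = dmax K (f y) (f z) := by rw [hfy, hz]
    have h2 : dmax K (f y) (f z) ≤ C * dmax K y z := hlip y hyX z (hXsub hzX')
    have h3 : dmax K y z ≤ C * dmax K y z := le_of_le_of_eq (le_of_eq h1) rfl |>.trans h2
    have h4 : 0 ≤ dmax K y z := dmax_nonneg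
    have h5 : dmax K y z = 0 := le_antisymm (by nlinarith) h4
    exact dmax_eq_zero_iff.mp h5


end Tame
end
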